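/- arXiv:0903.4625 — 10 statements merged into one kernel-verified Lean document; each statement's English description precedes it below -/
import Mathlib

section
/- Let σ be a probability measure on ℝ with ∫|x|^k dσ(x) < ∞ which is purely atomic with exactly m atoms, and let k ≥ 2m. Then the only quadrature formula of degree at least k for σ is σ itself; that is, if x₁ < … < x_n are distinct reals and λ₁,…,λ_n > 0 satisfy ∑_{i=1}^n λ_i = 1 and ∑_{i=1}^n λ_i x_i^j = ∫ x^j dσ(x) for all integers 0 ≤ j ≤ k, then the measure ∑_{i=1}^n λ_i δ_{x_i} equals σ. -/
/-!
Matching moments up to degree `k` means that the quadrature and `σ` integrate every polynomial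
of degree at most `k` alike. The square of the nodal polynomial of the `m` atoms has degree
`2m ≤ k`, is nonnegative and vanishes at the atoms, so its quadrature sum is zero and every node
is an atom. Integrating the Lagrange basis polynomials of the atoms (of degree `m - 1`) then shows
that the quadrature weights of the nodes at each atom add up to its mass.
-/

open MeasureTheory Polynomial Finset
open scoped ENNReal

section AtomicMeasure

variable {α ι : Type*} [MeasurableSpace α] [Fintype ι]

theorem ne_top_of_isFiniteMeasure_sum_smul_dirac (a : ι → α) (w : ι → ℝ≥0∞)
    [IsFiniteMeasure (∑ i, w i • Measure.dirac (a i))] (i : ι) : w i ≠ ∞ := by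
  have h := measure_ne_top (∑ i, w i • Measure.dirac (a i)) Set.univ
  simp only [Measure.coe_finsetSum, Finset.sum_apply, Measure.smul_apply, measure_univ,
    smul_eq_mul, mul_one] at h
  exact ENNReal.sum_ne_top.mp h i (mem_univ i)

theorem integral_sum_smul_dirac [MeasurableSingletonClass α] {E : Type*} [NormedAddCommGroup E]
    [NormedSpace ℝ E] [CompleteSpace E] (a : ι → α) {w : ι → ℝ≥0∞} (hw : ∀ i, w i ≠ ∞)
    (f : α → E) :
    ∫ t, f t ∂(∑ i, w i • Measure.dirac (a i)) = ∑ i, (w i).toReal • f (a i) := by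
  rw [integral_finsetSum_measure fun i _ => (integrable_dirac enorm_lt_top).smul_measure (hw i)]
  exact sum_congr rfl fun i _ => by rw [integral_smul_measure, integral_dirac]

end AtomicMeasure

theorem Finset.sum_smul_comp_eq_sum_fiberwise {ι κ R M : Type*} [Fintype ι] [Fintype κ]
    [DecidableEq κ] [Semiring R] [AddCommMonoid M] [Module R M] (c : ι → R) (f : ι → κ)
    (v : κ → M) : ∑ i, c i • v (f i) = ∑ t, (∑ i with f i = t, c i) • v t := by
  rw [← sum_fiberwise univ f]
  refine sum_congr rfl fun t _ => ?_
  rw [sum_smul]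
  exact sum_congr rfl fun i hi => by rw [(mem_filter.mp hi).2]

section Quadrature

variable {R ι κ : Type*} [Fintype ι] [Fintype κ]

theorem sum_mul_eval_eq_sum_coeff_mul_moment [CommSemiring R] {k : ℕ} {P : R[X]}
    (hP : P.natDegree ≤ k) (c x : ι → R) :
    ∑ i, c i * P.eval (x i) = ∑ j ∈ range (k + 1), P.coeff j * ∑ i, c i * x i ^ j := by
  simp_rw [P.eval_eq_sum_range' (Nat.lt_succ_of_le hP), mul_sum]
  rw [sum_comm]
  exact sum_congr rfl fun j _ => sum_congr rfl fun i _ => by ring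

theorem sum_mul_eval_eq_of_moments_eq [CommSemiring R] {k : ℕ} {c x : ι → R} {d y : κ → R}
    (h : ∀ j ≤ k, ∑ i, c i * x i ^ j = ∑ t, d t * y t ^ j) {P : R[X]} (hP : P.natDegree ≤ k) :
    ∑ i, c i * P.eval (x i) = ∑ t, d t * P.eval (y t) := by
  rw [sum_mul_eval_eq_sum_coeff_mul_moment hP, sum_mul_eval_eq_sum_coeff_mul_moment hP]
  exact sum_congr rfl fun j hj => by rw [h j (Nat.lt_succ_iff.mp (mem_range.mp hj))]

theorem exists_eq_of_sum_mul_eval_eq [CommRing R] [LinearOrder R] [IsStrictOrderedRing R]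
    {k : ℕ} {c x : ι → R} {d y : κ → R} (hc : ∀ i, 0 < c i)
    (h : ∀ P : R[X], P.natDegree ≤ k → ∑ i, c i * P.eval (x i) = ∑ t, d t * P.eval (y t))
    (hk : 2 * Fintype.card κ ≤ k) (i : ι) : ∃ t, x i = y t := by
  set N := Lagrange.nodal univ y
  have hN : (N ^ 2).natDegree ≤ k := by
    rw [natDegree_pow, Lagrange.natDegree_nodal, card_univ]; omega
  have hsum : ∑ i, c i * N.eval (x i) ^ 2 = 0 := by
    simpa [N, Lagrange.eval_nodal_at_node (mem_univ _)] using h _ hN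
  have hterm := (sum_eq_zero_iff_of_nonneg fun i _ => mul_nonneg (hc i).le (sq_nonneg _)).mp
    hsum i (mem_univ i)
  have hNx : N.eval (x i) = 0 := by simpa [(hc i).ne'] using hterm
  obtain ⟨t, -, ht⟩ := prod_eq_zero_iff.mp (Lagrange.eval_nodal.symm.trans hNx)
  exact ⟨t, sub_eq_zero.mp ht⟩

theorem sum_filter_eq_of_sum_mul_eval_eq [Field R] [DecidableEq κ] {k : ℕ} {c : ι → R}
    {d y : κ → R} {f : ι → κ} (hy : Function.Injective y)
    (h : ∀ P : R[X], P.natDegree ≤ k → ∑ i, c i * P.eval (y (f i)) = ∑ t, d t * P.eval (y t))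
    (hk : Fintype.card κ ≤ k + 1) (t : κ) : ∑ i with f i = t, c i = d t := by
  have hinj : Set.InjOn y (univ : Finset κ) := hy.injOn
  have heval : ∀ s, (Lagrange.basis univ y t).eval (y s) = if t = s then 1 else 0 := by
    intro s
    split_ifs with hts
    · exact hts ▸ Lagrange.eval_basis_self hinj (mem_univ t)
    · exact Lagrange.eval_basis_of_ne hts (mem_univ s)
  have hdeg : (Lagrange.basis univ y t).natDegree ≤ k := by
    rw [Lagrange.natDegree_basis hinj (mem_univ t), card_univ]; omega
  simpa [heval, sum_filter, eq_comm] using h _ hdeg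

end Quadrature

theorem purely_atomic_unique_quadrature_general
    (σ : Measure ℝ) [IsProbabilityMeasure σ] (m k : ℕ) (hk : 2 * m ≤ k)
    (hatomic : ∃ (a : Fin m → ℝ) (w : Fin m → ℝ≥0∞),
      Function.Injective a ∧ (∀ i, w i ≠ 0) ∧ σ = ∑ i, w i • Measure.dirac (a i))
    (n : ℕ) (x : Fin n → ℝ) (l : Fin n → ℝ)
    (hl : ∀ i, 0 < l i)
    (hquad : ∀ j : ℕ, j ≤ k → ∑ i, l i * x i ^ j = ∫ t, t ^ j ∂σ) :
    (∑ i, ENNReal.ofReal (l i) • Measure.dirac (x i)) = σ := by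
  obtain ⟨a, w, ha, -, rfl⟩ := hatomic
  have hw := ne_top_of_isFiniteMeasure_sum_smul_dirac a w
  have hpoly : ∀ P : ℝ[X], P.natDegree ≤ k →
      ∑ i, l i * P.eval (x i) = ∑ t, (w t).toReal * P.eval (a t) := fun P hP =>
    sum_mul_eval_eq_of_moments_eq (fun j hj => by
      rw [hquad j hj, integral_sum_smul_dirac a hw]; simp only [smul_eq_mul]) hP
  choose f hf using exists_eq_of_sum_mul_eval_eq hl hpoly (by rwa [Fintype.card_fin])
  simp_rw [hf] at hpoly ⊢
  have hweight := sum_filter_eq_of_sum_mul_eval_eq ha hpoly (by rw [Fintype.card_fin]; omega)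
  rw [sum_smul_comp_eq_sum_fiberwise _ f fun t => Measure.dirac (a t)]
  refine sum_congr rfl fun t _ => ?_
  rw [← ENNReal.ofReal_sum_of_nonneg fun i _ => (hl i).le, hweight, ENNReal.ofReal_toReal (hw t)]

/-- If `σ` is a purely atomic probability measure with exactly `m` atoms, `k ≥ 2m`, and
`σ` has finite `k`-th absolute moment, then the only quadrature formula of degree at least `k`
for `σ` is `σ` itself. -/
theorem purely_atomic_unique_quadrature
    (σ : Measure ℝ) [IsProbabilityMeasure σ] (m k : ℕ) (hk : 2 * m ≤ k)
    (hint : Integrable (fun x => |x| ^ k) σ)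
    (hatomic : ∃ (a : Fin m → ℝ) (w : Fin m → ℝ≥0∞),
      Function.Injective a ∧ (∀ i, w i ≠ 0) ∧ σ = ∑ i, w i • Measure.dirac (a i))
    (n : ℕ) (x : Fin n → ℝ) (l : Fin n → ℝ)
    (hx : StrictMono x) (hl : ∀ i, 0 < l i) (hlsum : ∑ i, l i = 1)
    (hquad : ∀ j : ℕ, j ≤ k → ∑ i, l i * x i ^ j = ∫ t, t ^ j ∂σ) :
    (∑ i, ENNReal.ofReal (l i) • Measure.dirac (x i)) = σ :=
  purely_atomic_unique_quadrature_general σ m k hk hatomic n x l hl hquad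
end

section
/- Let m ≥ 1 and k = 2m−1, and let σ be a probability measure on ℝ with ∫|x|^k dσ(x) < ∞. Suppose ξ₁ < ξ₂ < … < ξ_m are real numbers and λ₁,…,λ_m > 0 satisfy ∑_{i=1}^m λ_i = 1 and ∑_{i=1}^m λ_i·ξ_i^j = ∫ x^j dσ(x) for all integers 0 ≤ j ≤ k (i.e., they form the Gaussian quadrature for σ). Then every Chebyshev-type quadrature for σ of degree at least k with n nodes satisfies n ≥ 1/min(λ₁, λ_m). -/
/-!
Let `ξ₀` be the leftmost Gaussian node and `ν = ∏_{i ≠ 0} (X - ξᵢ)`. The polynomials `ν²` and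
`(X - ξ₀) ν²` have degree at most `2m - 1`, so both quadratures integrate them alike; the Gaussian
one gives `λ₀ ν(ξ₀)²` and `0`. Hence the Chebyshev nodes, weighted by `ν(xₖ)²`, have mean `ξ₀`,
so some node satisfies `xₖ ≤ ξ₀`, and there every factor of `ν²` is at least its value at `ξ₀`.
Thus `ν(ξ₀)² ≤ ∑ₖ ν(xₖ)² = n λ₀ ν(ξ₀)²`, i.e. `n λ₀ ≥ 1`. The rightmost node is handled by
the reflection `t ↦ -t`.
-/

open MeasureTheory Polynomial Finset Lagrange

namespace Polynomial

variable {R ι κ : Type*} [CommSemiring R] [Fintype ι] [Fintype κ]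

theorem sum_mul_eval_eq_sum_range_coeff_mul {p : R[X]} {d : ℕ} (hp : p.natDegree < d)
    (w a : ι → R) :
    ∑ i, w i * p.eval (a i) = ∑ e ∈ range d, p.coeff e * ∑ i, w i * a i ^ e := by
  simp only [eval_eq_sum_range' hp, mul_sum]
  rw [sum_comm]
  exact sum_congr rfl fun _ _ => sum_congr rfl fun _ _ => mul_left_comm _ _ _

theorem sum_mul_eval_eq_of_sum_mul_pow_eq {w a : ι → R} {v b : κ → R} {d : ℕ}
    (h : ∀ j < d, ∑ i, w i * a i ^ j = ∑ k, v k * b k ^ j) {p : R[X]} (hp : p.natDegree < d) :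
    ∑ i, w i * p.eval (a i) = ∑ k, v k * p.eval (b k) := by
  rw [sum_mul_eval_eq_sum_range_coeff_mul hp, sum_mul_eval_eq_sum_range_coeff_mul hp]
  exact sum_congr rfl fun e he => by rw [h e (mem_range.1 he)]

end Polynomial

theorem sq_eval_nodal_le_sq_eval_nodal {ι : Type*} {s : Finset ι} {v : ι → ℝ} {a t : ℝ}
    (hs : ∀ i ∈ s, a < v i) (ht : t ≤ a) :
    (nodal s v).eval a ^ 2 ≤ (nodal s v).eval t ^ 2 := by
  simp only [eval_nodal, ← prod_pow]
  refine prod_le_prod (fun _ _ => sq_nonneg _) fun i hi => ?_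
  nlinarith [hs i hi]

theorem exists_le_of_sum_sub_mul_eq_zero {κ : Type*} [Fintype κ] {x f : κ → ℝ} {a : ℝ}
    (hf : ∀ k, 0 ≤ f k) (hsum : ∑ k, f k ≠ 0) (hmean : ∑ k, (x k - a) * f k = 0) :
    ∃ k, x k ≤ a := by
  by_contra! hright
  have hterm := (sum_eq_zero_iff_of_nonneg fun k _ =>
    mul_nonneg (sub_pos.2 (hright k)).le (hf k)).1 hmean
  exact hsum <| sum_eq_zero fun k hk =>
    (mul_eq_zero.1 (hterm k hk)).resolve_left (sub_pos.2 (hright k)).ne'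

theorem one_le_card_mul_weight_of_forall_lt {ι κ : Type*} [Fintype ι] [DecidableEq ι] [Fintype κ]
    {ξ lam : ι → ℝ} {x : κ → ℝ}
    (hmom : ∀ j < 2 * Fintype.card ι,
      (Fintype.card κ : ℝ)⁻¹ * ∑ k, x k ^ j = ∑ i, lam i * ξ i ^ j)
    {i₀ : ι} (hlam : 0 < lam i₀) (hξ : ∀ i ≠ i₀, ξ i₀ < ξ i) :
    1 ≤ Fintype.card κ * lam i₀ := by
  set ν := nodal (univ.erase i₀) ξ
  set n : ℝ := (Fintype.card κ : ℝ)
  have hcard : 0 < Fintype.card ι := Fintype.card_pos_iff.2 ⟨i₀⟩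
  have hνdeg : ν.natDegree = Fintype.card ι - 1 := by
    simp [ν, card_erase_of_mem]
  have hξ' : ∀ i ∈ univ.erase i₀, ξ i₀ < ξ i := fun i hi => hξ i (ne_of_mem_erase hi)
  have hν₀ : 0 < ν.eval (ξ i₀) ^ 2 :=
    sq_pos_of_ne_zero (eval_nodal_not_at_node fun i hi => (hξ' i hi).ne)
  have hνnode : ∀ i ≠ i₀, ν.eval (ξ i) = 0 := fun i hi =>
    eval_nodal_at_node (mem_erase.2 ⟨hi, mem_univ i⟩)
  have transfer : ∀ p : ℝ[X], p.natDegree < 2 * Fintype.card ι →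
      ∑ k, n⁻¹ * p.eval (x k) = ∑ i, lam i * p.eval (ξ i) := fun p =>
    sum_mul_eval_eq_of_sum_mul_pow_eq fun j hj => by rw [← hmom j hj, mul_sum]
  have hsq : n⁻¹ * ∑ k, ν.eval (x k) ^ 2 = lam i₀ * ν.eval (ξ i₀) ^ 2 := by
    have := transfer (ν ^ 2) (by rw [natDegree_pow]; omega)
    simp only [eval_pow, ← mul_sum] at this
    rw [this, sum_eq_single i₀ (fun i _ hi => by rw [hνnode i hi]; ring) (by simp)]
  have hodd : n⁻¹ * ∑ k, (x k - ξ i₀) * ν.eval (x k) ^ 2 = 0 := by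
    have := transfer ((X - C (ξ i₀)) * ν ^ 2) (by
      refine natDegree_mul_le.trans_lt ?_
      rw [natDegree_pow, natDegree_X_sub_C]; omega)
    simp only [eval_mul, eval_pow, eval_sub, eval_X, eval_C, ← mul_sum] at this
    rw [this]
    refine sum_eq_zero fun i _ => ?_
    rcases eq_or_ne i i₀ with rfl | hi
    · ring
    · rw [hνnode i hi]; ring
  have hn : n ≠ 0 := by
    rintro h
    rw [h, inv_zero, zero_mul] at hsq
    exact (mul_pos hlam hν₀).ne hsq
  rw [inv_mul_eq_iff_eq_mul₀ hn] at hsq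
  replace hodd := (mul_eq_zero.1 hodd).resolve_left (inv_ne_zero hn)
  have hpos : ∑ k, ν.eval (x k) ^ 2 ≠ 0 := by
    rw [hsq]; exact mul_ne_zero hn (mul_pos hlam hν₀).ne'
  obtain ⟨k, hk⟩ := exists_le_of_sum_sub_mul_eq_zero (fun k => sq_nonneg (ν.eval (x k))) hpos hodd
  rw [← le_mul_iff_one_le_left hν₀, mul_assoc, ← hsq]
  exact (sq_eval_nodal_le_sq_eval_nodal hξ' hk).trans
    (single_le_sum (fun k _ => sq_nonneg (ν.eval (x k))) (mem_univ k))

theorem one_le_card_mul_weight_of_forall_gt {ι κ : Type*} [Fintype ι] [DecidableEq ι] [Fintype κ]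
    {ξ lam : ι → ℝ} {x : κ → ℝ}
    (hmom : ∀ j < 2 * Fintype.card ι,
      (Fintype.card κ : ℝ)⁻¹ * ∑ k, x k ^ j = ∑ i, lam i * ξ i ^ j)
    {i₀ : ι} (hlam : 0 < lam i₀) (hξ : ∀ i ≠ i₀, ξ i < ξ i₀) :
    1 ≤ Fintype.card κ * lam i₀ := by
  refine one_le_card_mul_weight_of_forall_lt (ξ := -ξ) (x := -x) (fun j hj => ?_) hlam
    fun i hi => neg_lt_neg (hξ i hi)
  calc (Fintype.card κ : ℝ)⁻¹ * ∑ k, (-x) k ^ j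
      = (-1) ^ j * ((Fintype.card κ : ℝ)⁻¹ * ∑ k, x k ^ j) := by
        rw [mul_sum, mul_sum, mul_sum]
        exact sum_congr rfl fun k _ => by rw [Pi.neg_apply, neg_pow]; ring
    _ = ∑ i, lam i * (-ξ) i ^ j := by
        rw [hmom j hj, mul_sum]
        exact sum_congr rfl fun i _ => by rw [Pi.neg_apply, neg_pow]; ring

/-- Bernstein's lower bound: if `ξ₁ < … < ξ_m` with weights `λ₁,…,λ_m` form the Gaussian
quadrature of the probability measure `σ` (reproducing moments up to order `k = 2m−1`), then
every Chebyshev-type quadrature for `σ` of degree at least `k` with `n ≥ 1` nodes satisfies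
`n ≥ 1/min(λ₁, λ_m)`. -/
theorem bernstein_gaussian_lower_bound
    (m : ℕ) (hm : 1 ≤ m) (σ : Measure ℝ)
    (ξ lam : Fin m → ℝ) (hξ : StrictMono ξ) (hlam : ∀ i, 0 < lam i)
    (hlsum : ∑ i, lam i = 1)
    (hgauss : ∀ j : ℕ, j ≤ 2 * m - 1 → ∑ i, lam i * ξ i ^ j = ∫ t, t ^ j ∂σ)
    (n : ℕ) (hn : 1 ≤ n) (x : Fin n → ℝ)
    (hquad : ∀ j : ℕ, 1 ≤ j → j ≤ 2 * m - 1 →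
      (n : ℝ)⁻¹ * ∑ i, x i ^ j = ∫ t, t ^ j ∂σ) :
    1 / min (lam ⟨0, by omega⟩) (lam ⟨m - 1, by omega⟩) ≤ (n : ℝ) := by
  have hmom : ∀ j < 2 * Fintype.card (Fin m),
      (Fintype.card (Fin n) : ℝ)⁻¹ * ∑ k, x k ^ j = ∑ i, lam i * ξ i ^ j := by
    simp only [Fintype.card_fin]
    rintro (_ | j) hj
    · simp only [pow_zero, mul_one, sum_const, card_univ, Fintype.card_fin, nsmul_eq_mul, hlsum]
      exact inv_mul_cancel₀ (Nat.cast_ne_zero.2 (by omega))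
    · rw [hquad _ j.succ_pos (by omega), hgauss _ (by omega)]
  have hfirst := one_le_card_mul_weight_of_forall_lt hmom (hlam ⟨0, by omega⟩) fun i hi =>
    hξ (Fin.lt_def.2 (Nat.pos_of_ne_zero (Fin.val_ne_iff.2 hi)))
  have hlast := one_le_card_mul_weight_of_forall_gt hmom (hlam ⟨m - 1, by omega⟩) fun i hi =>
    hξ (Fin.lt_def.2 (show (i : ℕ) < m - 1 from
      lt_of_le_of_ne (Nat.le_sub_one_of_lt i.isLt) (Fin.val_ne_iff.2 hi)))
  rw [Fintype.card_fin] at hfirst hlast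
  rcases min_choice (lam ⟨0, by omega⟩) (lam ⟨m - 1, by omega⟩) with h | h <;>
    rw [h, div_le_iff₀ (hlam _)] <;> linarith
end

section
/- Let σ be a probability measure on ℝ with σ([0,1]) = 1, absolutely continuous with respect to Lebesgue measure with density essentially bounded by M. Let m ≥ 1, suppose ξ₁ < ξ₂ < … < ξ_m are real numbers and λ₁,…,λ_m > 0 satisfy ∑_{i=1}^m λ_i = 1 and ∑_{i=1}^m λ_i·ξ_i^j = ∫ x^j dσ(x) for all integers 0 ≤ j ≤ 2m−1 (the Gaussian quadrature for σ). Then λ₁ ≥ 1/⌈75·e⁴·(2m−1)·M·(12eM)^{2m−2}⌉. -/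
/-!
Let `Q = ∏_{i ≠ 1} (X - ξ_i)`, monic of degree `d = m - 1`. Exactness of the quadrature on `Q²`
gives `λ₁ Q(ξ₁)² = ∫ Q² dσ`, and exactness on `(X - a) ∏_{i ≠ k} (X - ξ_i)²` shows that every
node lies in `[0, 1]`, so `|Q(ξ₁)| ≤ 1` and `λ₁ ≥ ∫ Q² dσ`.

The sublevel set `E = {|Q| ≤ ε^d}` is small: picking `d + 1` points of `E` spread out according
to the measure of `E` and writing the leading coefficient `1` of `Q` by Lagrange interpolation
at them yields `d! (|E| / (2d+1))^d ≤ (2ε)^d`, hence `|E| ≤ 6eε`. For `ε = 1/(12eM)` the set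
`E` carries `σ`-mass at most `1/2`, so `∫ Q² dσ ≥ ε^{2d}/2`.
-/

open MeasureTheory Finset Polynomial
open scoped ENNReal Nat

section CumulativeVolume

open Set

variable {E : Set ℝ} {p q : ℝ}

lemma volume_inter_ne_top_of_subset_Icc (hE : E ⊆ Icc p q) (s : Set ℝ) :
    volume (E ∩ s) ≠ ∞ :=
  measure_ne_top_of_subset (inter_subset_left.trans hE) (by simp)

lemma volume_real_inter_Iic_le_add (hE : E ⊆ Icc p q) (a b : ℝ) :
    volume.real (E ∩ Iic b) ≤ volume.real (E ∩ Iic a) + volume.real (E ∩ Ioc a b) := by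
  calc volume.real (E ∩ Iic b) ≤ volume.real (E ∩ Iic a ∪ E ∩ Ioc a b) := by
        refine measureReal_mono (fun x hx => ?_) ?_
        · rcases le_or_gt x a with hxa | hxa
          exacts [Or.inl ⟨hx.1, hxa⟩, Or.inr ⟨hx.1, hxa, hx.2⟩]
        · rw [← inter_union_distrib_left]
          exact volume_inter_ne_top_of_subset_Icc hE _
    _ ≤ _ := measureReal_union_le _ _

lemma monotone_volume_real_inter_Iic (hE : E ⊆ Icc p q) :
    Monotone fun y => volume.real (E ∩ Iic y) := fun _ _ hab =>
  measureReal_mono (inter_subset_inter_right _ (Iic_subset_Iic.mpr hab))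
    (volume_inter_ne_top_of_subset_Icc hE _)

lemma volume_real_inter_Iic_sub_le (hE : E ⊆ Icc p q) {a b : ℝ} (hab : a ≤ b) :
    volume.real (E ∩ Iic b) - volume.real (E ∩ Iic a) ≤ b - a := by
  have := volume_real_inter_Iic_le_add hE a b
  have : volume.real (E ∩ Ioc a b) ≤ b - a := by
    rw [← Real.volume_real_Ioc_of_le hab]
    exact measureReal_mono inter_subset_right measure_Ioc_lt_top.ne
  linarith

lemma continuous_volume_real_inter_Iic (hE : E ⊆ Icc p q) :
    Continuous fun y => volume.real (E ∩ Iic y) := by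
  refine (LipschitzWith.of_le_add fun a b => ?_).continuous
  rcases le_total a b with hab | hba
  · linarith [monotone_volume_real_inter_Iic hE hab, dist_nonneg (x := a) (y := b)]
  · linarith [volume_real_inter_Iic_sub_le hE hba, Real.dist_eq a b, le_abs_self (a - b)]

lemma exists_mem_volume_real_inter_Iic_mem_Icc (hE : E ⊆ Icc p q) {a b : ℝ} (ha : 0 ≤ a)
    (hab : a < b) (hb : b ≤ volume.real E) :
    ∃ x ∈ E, volume.real (E ∩ Iic x) ∈ Icc a b := by
  have hFp : volume.real (E ∩ Iic p) = 0 := by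
    have : E ∩ Iic p ⊆ {p} := fun x hx => le_antisymm hx.2 (hE hx.1).1
    simp [Measure.real, measure_mono_null this Real.volume_singleton]
  have hFq : volume.real (E ∩ Iic q) = volume.real E := by
    rw [inter_eq_left.mpr fun x hx => Set.mem_Iic.mpr (hE hx).2]
  have hpq : p ≤ q := by
    by_contra! h
    have : E = ∅ := subset_empty_iff.mp (by simpa [Icc_eq_empty_of_lt h] using hE)
    simp only [this, measureReal_empty] at hb
    linarith
  have hIVT := intermediate_value_Icc hpq (continuous_volume_real_inter_Iic hE).continuousOn
  rw [hFp, hFq] at hIVT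
  obtain ⟨u, -, hu⟩ := hIVT ⟨ha, hab.le.trans hb⟩
  obtain ⟨v, -, hv⟩ := hIVT ⟨ha.trans hab.le, hb⟩
  have huv : u ≤ v := by
    by_contra! h
    linarith [monotone_volume_real_inter_Iic hE h.le]
  obtain ⟨x, hxE, hxuv⟩ : (E ∩ Ioc u v).Nonempty := by
    by_contra! h
    have := volume_real_inter_Iic_le_add hE u v
    simp only [h, measureReal_empty] at this
    linarith
  exact ⟨x, hxE, hu ▸ monotone_volume_real_inter_Iic hE hxuv.1.le,
    hv ▸ monotone_volume_real_inter_Iic hE hxuv.2⟩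

/-- Choosing `y k` with cumulative volume in `[2kθ, (2k+1)θ]` leaves a gap of at least `θ`
between consecutive points. -/
lemma exists_separated_points_of_subset_Icc (hE : E ⊆ Icc p q) (hE0 : 0 < volume.real E)
    (d : ℕ) : ∃ y : ℕ → ℝ, (∀ k ≤ d, y k ∈ E) ∧
      ∀ j k, j < k → k ≤ d →
        (k - j : ℝ) * (volume.real E / (2 * d + 1)) ≤ y k - y j := by
  set θ := volume.real E / (2 * d + 1)
  have hθ : 0 < θ := by positivity
  have hsel (k : ℕ) : ∃ x, k ≤ d →
      x ∈ E ∧ volume.real (E ∩ Iic x) ∈ Icc (2 * k * θ) ((2 * k + 1) * θ) := by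
    by_cases hk : k ≤ d
    · have hkd : (k : ℝ) ≤ d := by exact_mod_cast hk
      have hEθ : volume.real E = (2 * d + 1) * θ := by simp only [θ]; field_simp
      obtain ⟨x, hx⟩ := exists_mem_volume_real_inter_Iic_mem_Icc hE (by positivity)
        (by linarith : 2 * k * θ < (2 * k + 1) * θ) (by rw [hEθ]; gcongr)
      exact ⟨x, fun _ => hx⟩
    · exact ⟨0, fun h => absurd h hk⟩
  choose y hy using hsel
  refine ⟨y, fun k hk => (hy k hk).1, fun j k hjk hk => ?_⟩
  obtain ⟨-, hj1, hj2⟩ := hy j (hjk.le.trans hk)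
  obtain ⟨-, hk1, hk2⟩ := hy k hk
  have hjk' : (j : ℝ) + 1 ≤ k := by exact_mod_cast hjk
  have hyjk : y j ≤ y k := by
    by_contra! h
    nlinarith [monotone_volume_real_inter_Iic hE h.le]
  nlinarith [volume_real_inter_Iic_sub_le hE hyjk]

end CumulativeVolume

lemma prod_range_abs_sub_eq_factorial (k : ℕ) : ∏ j ∈ range k, |(k : ℝ) - j| = k ! := by
  induction k with
  | zero => simp
  | succ k ih =>
    rw [prod_range_succ', Nat.factorial_succ, mul_comm]
    push_cast
    simp only [add_sub_add_right_eq_sub, ih, sub_zero]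
    rw [abs_of_nonneg (by positivity)]

lemma prod_erase_range_abs_sub_eq_factorial_mul_factorial {k d : ℕ} (hkd : k ≤ d) :
    ∏ j ∈ (range (d + 1)).erase k, |(k : ℝ) - j| = k ! * (d - k)! := by
  induction d, hkd using Nat.le_induction with
  | base => simp [range_add_one, prod_range_abs_sub_eq_factorial]
  | succ d hkd ih =>
    rw [range_add_one, erase_insert_of_ne (by omega), prod_insert (by simp), ih,
      Nat.succ_sub hkd, Nat.factorial_succ, abs_sub_comm, abs_of_nonneg]
    · push_cast [Nat.cast_sub hkd]
      ring
    · have : (k : ℝ) ≤ d := by exact_mod_cast hkd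
      push_cast
      linarith

lemma sum_range_inv_factorial_mul_factorial (d : ℕ) :
    ∑ k ∈ range (d + 1), ((k ! : ℝ) * (d - k)!)⁻¹ = 2 ^ d / d ! := by
  rw [show (2 : ℝ) ^ d = (2 ^ d : ℕ) by push_cast; rfl, ← Nat.sum_range_choose, Nat.cast_sum,
    sum_div]
  refine sum_congr rfl fun k hk => ?_
  rw [Nat.cast_choose ℝ (mem_range_succ_iff.mp hk)]
  field_simp

/-- By Lagrange interpolation the leading coefficient `1` of `Q` is a combination of its values at
`d + 1` points, with coefficients controlled by the separation of the points. -/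
theorem Polynomial.Monic.factorial_mul_pow_le_of_separated {Q : ℝ[X]} (hQ : Q.Monic)
    {y : ℕ → ℝ} {θ t : ℝ} (hθ : 0 < θ)
    (hsep : ∀ j k, j < k → k ≤ Q.natDegree → (k - j : ℝ) * θ ≤ y k - y j)
    (hQy : ∀ k ≤ Q.natDegree, |Q.eval (y k)| ≤ t) :
    (Q.natDegree ! : ℝ) * θ ^ Q.natDegree ≤ 2 ^ Q.natDegree * t := by
  set d := Q.natDegree
  set s := range (d + 1)
  have hsep' : ∀ j ∈ s, ∀ k ∈ s, |(k : ℝ) - j| * θ ≤ |y k - y j| := by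
    intro j hj k hk
    rw [mem_range_succ_iff] at hj hk
    rcases lt_trichotomy j k with h | rfl | h
    · rw [abs_of_pos (sub_pos.mpr (Nat.cast_lt.mpr h))]
      exact (hsep j k h hk).trans (le_abs_self _)
    · simp
    · rw [abs_sub_comm, abs_sub_comm (y k), abs_of_pos (sub_pos.mpr (Nat.cast_lt.mpr h))]
      exact (hsep k j h hj).trans (le_abs_self _)
  have hinj : Set.InjOn y s := by
    intro j hj k hk hjk
    by_contra hne
    have := hsep' j hj k hk
    rw [hjk, sub_self, abs_zero] at this
    have : 0 < |(k : ℝ) - j| := abs_pos.mpr (sub_ne_zero.mpr (by exact_mod_cast Ne.symm hne))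
    nlinarith
  have hprod (k : ℕ) (hk : k ∈ s) :
      θ ^ d * (k ! * (d - k)!) ≤ |∏ j ∈ s.erase k, (y k - y j)| := by
    calc θ ^ d * (k ! * (d - k)!) = ∏ j ∈ s.erase k, (|(k : ℝ) - j| * θ) := by
          rw [prod_mul_distrib, prod_const, card_erase_of_mem hk, card_range, Nat.add_sub_cancel,
            prod_erase_range_abs_sub_eq_factorial_mul_factorial (mem_range_succ_iff.mp hk),
            mul_comm]
      _ ≤ ∏ j ∈ s.erase k, |y k - y j| :=
          prod_le_prod (fun _ _ => by positivity) fun j hj => hsep' j (mem_of_mem_erase hj) k hk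
      _ = _ := (abs_prod _ _).symm
  have ht : 0 ≤ t := (abs_nonneg _).trans (hQy 0 (Nat.zero_le _))
  have hone : (1 : ℝ) ≤ t / θ ^ d * (2 ^ d / d !) := by
    calc (1 : ℝ) = Q.leadingCoeff := hQ.leadingCoeff.symm
      _ = ∑ k ∈ s, Q.eval (y k) / ∏ j ∈ s.erase k, (y k - y j) := by
          refine Lagrange.leadingCoeff_eq_sum hinj ?_
          rw [card_range, degree_eq_natDegree hQ.ne_zero]
          rfl
      _ ≤ ∑ k ∈ s, t / (θ ^ d * (k ! * (d - k)!)) := by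
          refine sum_le_sum fun k hk => (le_abs_self _).trans ?_
          rw [abs_div]
          exact div_le_div₀ ht (hQy k (mem_range_succ_iff.mp hk)) (by positivity) (hprod k hk)
      _ = t / θ ^ d * (2 ^ d / d !) := by
          rw [← sum_range_inv_factorial_mul_factorial, mul_sum]
          exact sum_congr rfl fun k _ => by field_simp
  rw [div_mul_div_comm, one_le_div (by positivity)] at hone
  linarith

theorem Polynomial.Monic.volume_real_le_of_abs_eval_le {Q : ℝ[X]} (hQ : Q.Monic)
    (hd : 0 < Q.natDegree) {E : Set ℝ} {p q : ℝ} (hE : E ⊆ Set.Icc p q) {ε : ℝ}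
    (hε : 0 < ε) (hQE : ∀ x ∈ E, |Q.eval x| ≤ ε ^ Q.natDegree) :
    volume.real E ≤ 6 * Real.exp 1 * ε := by
  set d := Q.natDegree
  rcases measureReal_nonneg.eq_or_lt with hE0 | hE0
  · rw [← hE0]; positivity
  obtain ⟨y, hyE, hsep⟩ := exists_separated_points_of_subset_Icc hE hE0 d
  set θ := volume.real E / (2 * d + 1)
  have hθ : 0 < θ := by positivity
  have hfact := hQ.factorial_mul_pow_le_of_separated hθ hsep fun k hk => hQE _ (hyE k hk)
  have hstirling : (d : ℝ) ^ d ≤ d ! * Real.exp 1 ^ d := by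
    have := Real.pow_div_factorial_le_exp (d : ℝ) d.cast_nonneg d
    rwa [div_le_iff₀ (by positivity), ← Real.exp_one_pow, mul_comm] at this
  have hdθ : d * θ ≤ 2 * Real.exp 1 * ε := by
    refine le_of_pow_le_pow_left₀ hd.ne' (by positivity) ?_
    calc (d * θ) ^ d = d ^ d * θ ^ d := mul_pow _ _ _
      _ ≤ d ! * Real.exp 1 ^ d * θ ^ d := by gcongr
      _ ≤ 2 ^ d * ε ^ d * Real.exp 1 ^ d := by rw [mul_right_comm]; gcongr
      _ = (2 * Real.exp 1 * ε) ^ d := by ring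
  have hd1 : (1 : ℝ) ≤ d := by exact_mod_cast hd
  calc volume.real E = (2 * d + 1) * θ := by simp only [θ]; field_simp
    _ ≤ 3 * (d * θ) := by nlinarith
    _ ≤ 6 * Real.exp 1 * ε := by linarith

theorem Polynomial.Monic.volume_setOf_abs_eval_le_le {Q : ℝ[X]} (hQ : Q.Monic)
    (hd : 0 < Q.natDegree) {ε : ℝ} (hε : 0 < ε) :
    volume {x | |Q.eval x| ≤ ε ^ Q.natDegree} ≤ ENNReal.ofReal (6 * Real.exp 1 * ε) := by
  set S := {x | |Q.eval x| ≤ ε ^ Q.natDegree}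
  have hS : IsCompact S := by
    have : S = (fun x => Q.eval x) ⁻¹' Set.Icc (-ε ^ Q.natDegree) (ε ^ Q.natDegree) := by
      ext x; simp [S, abs_le]
    rw [this]
    exact (Q.isProperMap_eval (natDegree_pos_iff_degree_pos.mp hd)).isCompact_preimage
      isCompact_Icc
  obtain ⟨p, hp⟩ := hS.bddBelow
  obtain ⟨q, hq⟩ := hS.bddAbove
  have hSpq : S ⊆ Set.Icc p q := fun x hx => ⟨hp hx, hq hx⟩
  rw [← ofReal_measureReal (measure_ne_top_of_subset hSpq (by simp))]
  exact ENNReal.ofReal_le_ofReal (hQ.volume_real_le_of_abs_eval_le hd hSpq hε fun x hx => hx)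

theorem Polynomial.Monic.le_integral_sq_eval {σ : Measure ℝ} [IsProbabilityMeasure σ] {M : ℝ}
    (hM : 0 < M) (hσ : σ ≤ ENNReal.ofReal M • volume) {Q : ℝ[X]} (hQ : Q.Monic)
    (hint : Integrable (fun x => Q.eval x ^ 2) σ) :
    ((12 * Real.exp 1 * M)⁻¹ ^ Q.natDegree) ^ 2 / 2 ≤ ∫ x, Q.eval x ^ 2 ∂σ := by
  rcases Nat.eq_zero_or_pos Q.natDegree with hd | hd
  · simp [hQ.natDegree_eq_zero.mp hd]
    norm_num
  set ε := (12 * Real.exp 1 * M)⁻¹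
  set t := ε ^ Q.natDegree
  have hε : 0 < ε := by positivity
  set S := {x | |Q.eval x| ≤ t}
  have hS : σ.real S ≤ 1 / 2 := by
    refine ENNReal.toReal_le_of_le_ofReal (by norm_num) ?_
    calc σ S ≤ ENNReal.ofReal M * volume S := Measure.le_iff'.mp hσ S
      _ ≤ ENNReal.ofReal M * ENNReal.ofReal (6 * Real.exp 1 * ε) := by
          gcongr; exact hQ.volume_setOf_abs_eval_le_le hd hε
      _ = ENNReal.ofReal (1 / 2) := by
          rw [← ENNReal.ofReal_mul hM.le]; congr 1; simp only [ε]; field_simp; ring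
  have hcover : Set.univ ⊆ {x | t ^ 2 ≤ Q.eval x ^ 2} ∪ S := fun x _ => by
    rcases le_total (t ^ 2) (Q.eval x ^ 2) with h | h
    exacts [Or.inl h, Or.inr (abs_le_of_sq_le_sq h (by positivity))]
  have hlarge : 1 / 2 ≤ σ.real {x | t ^ 2 ≤ Q.eval x ^ 2} := by
    have := (measureReal_mono (μ := σ) hcover).trans (measureReal_union_le _ S)
    rw [probReal_univ] at this
    linarith
  calc t ^ 2 / 2 ≤ t ^ 2 * σ.real {x | t ^ 2 ≤ Q.eval x ^ 2} := by
        rw [div_eq_mul_one_div]; gcongr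
    _ ≤ ∫ x, Q.eval x ^ 2 ∂σ :=
        mul_meas_ge_le_integral_of_nonneg (ae_of_all _ fun _ => sq_nonneg _) hint _

section Quadrature

variable {ι : Type*} [Fintype ι]

def IsExactQuadrature (σ : Measure ℝ) (w x : ι → ℝ) (n : ℕ) : Prop :=
  ∀ p : ℝ[X], p.natDegree ≤ n → ∑ i, w i * p.eval (x i) = ∫ t, p.eval t ∂σ

variable {σ : Measure ℝ} {w x : ι → ℝ} {n : ℕ}

lemma isExactQuadrature_of_moments (hint : ∀ j ≤ n, Integrable (fun t => t ^ j) σ)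
    (hmom : ∀ j ≤ n, ∑ i, w i * x i ^ j = ∫ t, t ^ j ∂σ) :
    IsExactQuadrature σ w x n := by
  intro p hp
  have hsum := fun t => eval_eq_sum_range' (Nat.lt_succ_of_le hp) t
  simp_rw [hsum]
  rw [integral_finsetSum _ fun j hj => (hint j (mem_range_succ_iff.mp hj)).const_mul _]
  simp_rw [mul_sum, integral_const_mul]
  rw [sum_comm]
  refine sum_congr rfl fun j hj => ?_
  rw [← hmom j (mem_range_succ_iff.mp hj), mul_sum]
  exact sum_congr rfl fun i _ => by ring

lemma IsExactQuadrature.weight_mul_eval_eq_integral (h : IsExactQuadrature σ w x n)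
    {p : ℝ[X]} (hp : p.natDegree ≤ n) {k : ι} (hvan : ∀ i ≠ k, p.eval (x i) = 0) :
    w k * p.eval (x k) = ∫ t, p.eval t ∂σ := by
  rw [← h p hp, Fintype.sum_eq_single k fun i hi => by rw [hvan i hi, mul_zero]]

variable [DecidableEq ι]

lemma IsExactQuadrature.weight_mul_eq_integral_mul_sq_nodal
    (h : IsExactQuadrature σ w x (2 * Fintype.card ι - 1)) {L : ℝ[X]} (hL : L.natDegree ≤ 1)
    (k : ι) :
    w k * (L.eval (x k) * (Lagrange.nodal (univ.erase k) x).eval (x k) ^ 2)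
      = ∫ t, L.eval t * (Lagrange.nodal (univ.erase k) x).eval t ^ 2 ∂σ := by
  have hcard : 0 < Fintype.card ι := Fintype.card_pos_iff.mpr ⟨k⟩
  have hdeg : (L * Lagrange.nodal (univ.erase k) x ^ 2).natDegree ≤ 2 * Fintype.card ι - 1 := by
    refine natDegree_mul_le.trans ?_
    rw [natDegree_pow, Lagrange.natDegree_nodal, card_erase_of_mem (mem_univ k), card_univ]
    omega
  simpa only [eval_mul, eval_pow] using h.weight_mul_eval_eq_integral hdeg fun i hi => by
    rw [eval_mul, eval_pow, Lagrange.eval_nodal_at_node (mem_erase.mpr ⟨hi, mem_univ i⟩)]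
    ring

lemma IsExactQuadrature.mem_Icc (h : IsExactQuadrature σ w x (2 * Fintype.card ι - 1))
    (hw : ∀ i, 0 < w i) (hx : Function.Injective x) {a b : ℝ}
    (hσ : ∀ᵐ t ∂σ, t ∈ Set.Icc a b) (k : ι) : x k ∈ Set.Icc a b := by
  set P := Lagrange.nodal (univ.erase k) x
  have hPpos : 0 < P.eval (x k) ^ 2 := by
    have : P.eval (x k) ≠ 0 :=
      Lagrange.eval_nodal_not_at_node fun i hi => hx.ne (mem_erase.mp hi).1.symm
    positivity
  have key (L : ℝ[X]) (hL : L.natDegree ≤ 1) (hLnn : ∀ t ∈ Set.Icc a b, 0 ≤ L.eval t) :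
      0 ≤ L.eval (x k) := by
    have : 0 ≤ w k * P.eval (x k) ^ 2 * L.eval (x k) := by
      rw [mul_assoc, mul_comm (P.eval _ ^ 2), h.weight_mul_eq_integral_mul_sq_nodal hL]
      refine integral_nonneg_of_ae ?_
      filter_upwards [hσ] with t ht
      exact mul_nonneg (hLnn t ht) (sq_nonneg _)
    exact nonneg_of_mul_nonneg_right (by linarith) (mul_pos (hw k) hPpos)
  have ha := key (X - C a) (by simp) fun t ht => by simpa using ht.1
  have hb := key (C b - X) ((natDegree_sub_le _ _).trans (by simp)) fun t ht => by
    simpa [sub_nonneg] using ht.2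
  simp only [eval_sub, eval_X, eval_C, sub_nonneg] at ha hb
  exact ⟨ha, hb⟩

end Quadrature

lemma integrable_eval_of_ae_mem_Icc {σ : Measure ℝ} [IsFiniteMeasure σ] {a b : ℝ}
    (hσ : ∀ᵐ t ∂σ, t ∈ Set.Icc a b) (p : ℝ[X]) : Integrable (fun t => p.eval t) σ := by
  rw [← Measure.restrict_eq_self_of_ae_mem hσ]
  exact p.continuous.continuousOn.integrableOn_compact isCompact_Icc

lemma one_div_ceil_le_sq_inv_pow_div_two {M : ℝ} (hM : 1 ≤ M) {m : ℕ} (hm : 1 ≤ m) :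
    1 / (⌈75 * Real.exp 1 ^ 4 * (2 * (m : ℝ) - 1) * M *
        (12 * Real.exp 1 * M) ^ (2 * m - 2)⌉₊ : ℝ)
      ≤ ((12 * Real.exp 1 * M)⁻¹ ^ (m - 1)) ^ 2 / 2 := by
  set K := (12 * Real.exp 1 * M) ^ (2 * m - 2)
  have hK : 0 < K := by positivity
  have hc : 2 ≤ 75 * Real.exp 1 ^ 4 * (2 * (m : ℝ) - 1) * M := by
    have he : 1 ≤ Real.exp 1 ^ 4 := one_le_pow₀ (by linarith [Real.add_one_le_exp 1])
    have hm' : (1 : ℝ) ≤ 2 * m - 1 := by linarith [(Nat.one_le_cast (α := ℝ)).mpr hm]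
    have := one_le_mul_of_one_le_of_one_le (one_le_mul_of_one_le_of_one_le he hm') hM
    linarith
  have hsq : ((12 * Real.exp 1 * M)⁻¹ ^ (m - 1)) ^ 2 = K⁻¹ := by
    rw [← pow_mul, inv_pow, show (m - 1) * 2 = 2 * m - 2 by omega]
  calc _ ≤ 1 / (75 * Real.exp 1 ^ 4 * (2 * (m : ℝ) - 1) * M * K) :=
        one_div_le_one_div_of_le (by positivity) (Nat.le_ceil _)
    _ ≤ 1 / (2 * K) := one_div_le_one_div_of_le (by positivity) (by gcongr)
    _ = _ := by rw [hsq]; field_simp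

lemma one_le_of_le_ofReal_smul_volume {σ : Measure ℝ} {M : ℝ}
    (hσM : σ ≤ ENNReal.ofReal M • volume) (hσ : σ (Set.Icc 0 1) = 1) : 1 ≤ M := by
  have := Measure.le_iff'.mp hσM (Set.Icc 0 1)
  rwa [hσ, Measure.smul_apply, Real.volume_Icc, sub_zero, ENNReal.ofReal_one, smul_eq_mul,
    mul_one, ENNReal.one_le_ofReal] at this

lemma Lagrange.sq_eval_nodal_le_one {ι : Type*} {s : Finset ι} {v : ι → ℝ} {t : ℝ}
    (ht : t ∈ Set.Icc 0 1) (hv : ∀ i ∈ s, v i ∈ Set.Icc 0 1) :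
    (Lagrange.nodal s v).eval t ^ 2 ≤ 1 := by
  rw [sq_le_one_iff_abs_le_one, Lagrange.eval_nodal, abs_prod]
  refine prod_le_one (fun _ _ => abs_nonneg _) fun i hi => abs_sub_le_iff.mpr ?_
  constructor <;> linarith [ht.1, ht.2, (hv i hi).1, (hv i hi).2]

/-- For a probability measure `σ` on `[0,1]` with density essentially bounded by `M`, the
smallest weight `λ₁` of its `m`-node Gaussian quadrature satisfies
`λ₁ ≥ 1/⌈75·e⁴·(2m−1)·M·(12eM)^(2m−2)⌉`. -/
theorem gaussian_quadrature_weight_lower_bound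
    (σ : Measure ℝ) [IsProbabilityMeasure σ] (hσ : σ (Set.Icc (0 : ℝ) 1) = 1)
    (f : ℝ → ℝ≥0∞) (M : ℝ) (hd : σ = volume.withDensity f)
    (hM : ∀ᵐ x ∂volume, f x ≤ ENNReal.ofReal M)
    (m : ℕ) (hm : 1 ≤ m) (ξ lam : Fin m → ℝ)
    (hξ : StrictMono ξ) (hlam : ∀ i, 0 < lam i)
    (hgauss : ∀ j : ℕ, j ≤ 2 * m - 1 → ∑ i, lam i * ξ i ^ j = ∫ t, t ^ j ∂σ) :
    1 / (⌈75 * Real.exp 1 ^ 4 * (2 * (m : ℝ) - 1) * M *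
        (12 * Real.exp 1 * M) ^ (2 * m - 2)⌉₊ : ℝ) ≤ lam ⟨0, by omega⟩ := by
  have hσM : σ ≤ ENNReal.ofReal M • volume :=
    hd ▸ (withDensity_mono hM).trans_eq (withDensity_const _)
  have hM1 := one_le_of_le_ofReal_smul_volume hσM hσ
  have hsupp : ∀ᵐ t ∂σ, t ∈ Set.Icc (0 : ℝ) 1 :=
    (ae_mem_iff_measure_eq measurableSet_Icc.nullMeasurableSet).mpr (by rw [hσ, measure_univ])
  have hint := integrable_eval_of_ae_mem_Icc hsupp
  have hexact : IsExactQuadrature σ lam ξ (2 * Fintype.card (Fin m) - 1) := by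
    rw [Fintype.card_fin]
    exact isExactQuadrature_of_moments (fun j _ => by simpa using hint (X ^ j)) hgauss
  have hnode := hexact.mem_Icc hlam hξ.injective hsupp
  set i₀ : Fin m := ⟨0, by omega⟩
  set Q := Lagrange.nodal (univ.erase i₀) ξ
  have hQdeg : Q.natDegree = m - 1 := by simp [Q, Lagrange.natDegree_nodal]
  have hweight := hexact.weight_mul_eq_integral_mul_sq_nodal (L := 1) (by simp) i₀
  simp only [eval_one, one_mul] at hweight
  calc _ ≤ ((12 * Real.exp 1 * M)⁻¹ ^ Q.natDegree) ^ 2 / 2 :=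
        hQdeg ▸ one_div_ceil_le_sq_inv_pow_div_two hM1 hm
    _ ≤ ∫ t, Q.eval t ^ 2 ∂σ :=
        Lagrange.nodal_monic.le_integral_sq_eval (by linarith) hσM
          ((hint (Q ^ 2)).congr (ae_of_all _ fun t => eval_pow 2))
    _ = lam i₀ * Q.eval (ξ i₀) ^ 2 := hweight.symm
    _ ≤ lam i₀ := mul_le_of_le_one_right (hlam i₀).le
        (Lagrange.sq_eval_nodal_le_one (hnode i₀) fun i _ => hnode i)
end

section
/- Let σ be a probability measure on ℝ with σ({0}) < 1, and let k ≥ 3 be an odd integer such that ∫|x|^k dσ(x) < ∞. Then every Chebyshev-type quadrature for σ of degree at least k with n nodes satisfies n ≥ (∫ x^k dσ(x))^{k−1} / (∫ x^{k−1} dσ(x))^{k}. In particular n⁰_σ(k) ≥ (∫ x^k dσ)^{k−1} / (∫ x^{k−1} dσ)^{k}. -/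
/-!
Compare the quadrature identities of degrees `k - 1` and `k`. Since `k - 1` is even,
`∑ xᵢ^(k-1) = ∑ |xᵢ|^(k-1)`, and the ℓ^k norm of the node vector is at most its ℓ^(k-1) norm,
so `|∑ xᵢ^k|^(k-1) ≤ (∑ xᵢ^(k-1))^k`. Dividing by the powers of `n` coming from the averages
leaves exactly one factor `n`.
-/

open MeasureTheory

namespace Finset

variable {ι : Type*} {s : Finset ι} {m : ℕ}

theorem sum_pow_succ_pow_le_sum_pow_pow_succ {f : ι → ℝ} (hm : m ≠ 0)
    (hf : ∀ i ∈ s, 0 ≤ f i) :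
    (∑ i ∈ s, f i ^ (m + 1)) ^ m ≤ (∑ i ∈ s, f i ^ m) ^ (m + 1) := by
  rcases s.eq_empty_or_nonempty with rfl | hs
  · simp [hm]
  obtain ⟨j, hj, hj_max⟩ := s.exists_max_image f hs
  set B := ∑ i ∈ s, f i ^ m
  have hB : 0 ≤ B := sum_nonneg fun i hi => pow_nonneg (hf i hi) m
  have h_sum_le : ∑ i ∈ s, f i ^ (m + 1) ≤ f j * B := by
    rw [mul_sum]
    refine sum_le_sum fun i hi => ?_
    rw [pow_succ']
    exact mul_le_mul_of_nonneg_right (hj_max i hi) (pow_nonneg (hf i hi) m)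
  have h_max_le : f j ^ m ≤ B := single_le_sum (fun i hi => pow_nonneg (hf i hi) m) hj
  calc (∑ i ∈ s, f i ^ (m + 1)) ^ m
      ≤ (f j * B) ^ m := pow_le_pow_left₀ (sum_nonneg fun i hi => pow_nonneg (hf i hi) _) h_sum_le m
    _ = f j ^ m * B ^ m := mul_pow _ _ _
    _ ≤ B * B ^ m := mul_le_mul_of_nonneg_right h_max_le (pow_nonneg hB m)
    _ = B ^ (m + 1) := (pow_succ' B m).symm

theorem abs_sum_pow_succ_pow_le_sum_pow_pow_succ (x : ι → ℝ) (hm : m ≠ 0) (hm_even : Even m) :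
    |∑ i ∈ s, x i ^ (m + 1)| ^ m ≤ (∑ i ∈ s, x i ^ m) ^ (m + 1) := by
  have h_abs : |∑ i ∈ s, x i ^ (m + 1)| ≤ ∑ i ∈ s, |x i| ^ (m + 1) := by
    simpa only [abs_pow] using abs_sum_le_sum_abs (fun i => x i ^ (m + 1)) s
  calc |∑ i ∈ s, x i ^ (m + 1)| ^ m
      ≤ (∑ i ∈ s, |x i| ^ (m + 1)) ^ m := pow_le_pow_left₀ (abs_nonneg _) h_abs m
    _ ≤ (∑ i ∈ s, |x i| ^ m) ^ (m + 1) :=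
        sum_pow_succ_pow_le_sum_pow_pow_succ hm fun i _ => abs_nonneg (x i)
    _ = (∑ i ∈ s, x i ^ m) ^ (m + 1) := by simp only [hm_even.pow_abs]

end Finset

theorem average_pow_succ_pow_div_average_pow_pow_succ_le_card {ι : Type*} [Fintype ι]
    (x : ι → ℝ) {m : ℕ} (hm : m ≠ 0) (hm_even : Even m) :
    ((Fintype.card ι : ℝ)⁻¹ * ∑ i, x i ^ (m + 1)) ^ m /
        ((Fintype.card ι : ℝ)⁻¹ * ∑ i, x i ^ m) ^ (m + 1) ≤ Fintype.card ι := by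
  set N : ℝ := (Fintype.card ι : ℝ)
  set A := ∑ i, x i ^ (m + 1)
  set B := ∑ i, x i ^ m
  rcases eq_or_ne N 0 with hN | hN
  · simp [hN, hm]
  have h_scale : (N⁻¹ * A) ^ m / (N⁻¹ * B) ^ (m + 1) = N * (A ^ m / B ^ (m + 1)) := by
    rw [mul_pow, mul_pow, mul_div_mul_comm, pow_succ,
      div_mul_cancel_left₀ (pow_ne_zero m (inv_ne_zero hN)), inv_inv]
  have h_ratio : A ^ m / B ^ (m + 1) ≤ 1 := by
    refine div_le_one_of_le₀ ?_ (pow_nonneg ?_ _)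
    · rw [← hm_even.pow_abs]
      exact Finset.abs_sum_pow_succ_pow_le_sum_pow_pow_succ x hm hm_even
    · exact Finset.sum_nonneg fun i _ => hm_even.pow_nonneg (x i)
  rw [h_scale]
  exact mul_le_of_le_one_right (Nat.cast_nonneg _) h_ratio

theorem moment_lower_bound_general
    (σ : Measure ℝ)
    (k : ℕ) (hk : 3 ≤ k) (hodd : Odd k)
    (n : ℕ) (x : Fin n → ℝ)
    (hquad : ∀ j : ℕ, 1 ≤ j → j ≤ k → (n : ℝ)⁻¹ * ∑ i, x i ^ j = ∫ t, t ^ j ∂σ) :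
    (∫ t, t ^ k ∂σ) ^ (k - 1) / (∫ t, t ^ (k - 1) ∂σ) ^ k ≤ (n : ℝ) := by
  obtain ⟨m, rfl⟩ : ∃ m, k = m + 1 := ⟨k - 1, by omega⟩
  have hm_even : Even m := by simpa [Nat.odd_add_one] using hodd
  rw [Nat.add_sub_cancel, ← hquad m (by omega) (by omega), ← hquad (m + 1) (by omega) le_rfl]
  simpa using average_pow_succ_pow_div_average_pow_pow_succ_le_card x (by omega) hm_even

/-- Moment-based lower bound: if `σ` is a probability measure on `ℝ` with `σ({0}) < 1` and
`k ≥ 3` is odd with finite `k`-th absolute moment, then every Chebyshev-type quadrature for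
`σ` of degree at least `k` with `n` nodes satisfies
`n ≥ (∫x^k dσ)^(k−1) / (∫x^(k−1) dσ)^k`. -/
theorem moment_lower_bound
    (σ : Measure ℝ) [IsProbabilityMeasure σ] (h0 : σ {(0 : ℝ)} < 1)
    (k : ℕ) (hk : 3 ≤ k) (hodd : Odd k)
    (hint : Integrable (fun x => |x| ^ k) σ)
    (n : ℕ) (x : Fin n → ℝ)
    (hquad : ∀ j : ℕ, 1 ≤ j → j ≤ k → (n : ℝ)⁻¹ * ∑ i, x i ^ j = ∫ t, t ^ j ∂σ) :
    (∫ t, t ^ k ∂σ) ^ (k - 1) / (∫ t, t ^ (k - 1) ∂σ) ^ k ≤ (n : ℝ) :=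
  moment_lower_bound_general σ k hk hodd n x hquad
end

section
/- There exists a constant C > 0 such that for every odd integer k > C there exists a probability measure σ_k on ℝ with σ_k([0,1]) = 1, absolutely continuous with respect to Lebesgue measure with density essentially bounded above by C·k, such that every Chebyshev-type quadrature for σ_k of degree at least k with n nodes satisfies n ≥ (1/(2√k))·(e/2)^k; that is, n⁰_{σ_k}(k) ≥ (1/(2√k))·(e/2)^k. -/
/-!
The measure `σ_k` puts the mass `w = √k (2/e)^k` uniformly on `(0, w/k]` (density `k`) and the
rest uniformly on `(1/2, 1]`. A quadrature of degree `k` integrates the polynomials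
`(γ - t)(1 - t)^(k-1)` and `(1 - t)^(k-1)`, with `γ = 1/k²`, exactly. The first one has positive
`σ_k`-integral, because the contribution of the blob near `0` beats the exponentially small
one of `(1/2, 1]`; hence some node lies below `γ`. Since `k - 1` is even, the second
polynomial is nonnegative, so `n ∫ (1 - t)^(k-1) dσ_k ≥ (1 - γ)^(k-1) ≈ 1`, while that
integral is about `w`.
-/

open MeasureTheory Set Polynomial
open scoped ENNReal

def IsChebyshevQuadrature (σ : Measure ℝ) (k : ℕ) {n : ℕ} (x : Fin n → ℝ) : Prop :=
  ∀ j : ℕ, 1 ≤ j → j ≤ k → (n : ℝ)⁻¹ * ∑ i, x i ^ j = ∫ t, t ^ j ∂σ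

namespace IsChebyshevQuadrature

variable {σ : Measure ℝ} {k n : ℕ} {x : Fin n → ℝ}

theorem ne_zero (hx : IsChebyshevQuadrature σ k x) (hk : 1 ≤ k) (hσ : ∫ t, t ∂σ ≠ 0) :
    n ≠ 0 := by
  rintro rfl
  exact hσ (by simpa using (hx 1 le_rfl hk).symm)

theorem inv_mul_sum_pow_eq_integral [IsProbabilityMeasure σ] (hx : IsChebyshevQuadrature σ k x)
    (hn : n ≠ 0) {j : ℕ} (hj : j ≤ k) :
    (n : ℝ)⁻¹ * ∑ i, x i ^ j = ∫ t, t ^ j ∂σ := by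
  rcases Nat.eq_zero_or_pos j with rfl | hj0
  · simp [hn]
  · exact hx j hj0 hj

theorem inv_mul_sum_eval_eq_integral [IsProbabilityMeasure σ] (hx : IsChebyshevQuadrature σ k x)
    (hn : n ≠ 0) (hint : ∀ j ≤ k, Integrable (fun t ↦ t ^ j) σ) {p : ℝ[X]}
    (hp : p.natDegree ≤ k) : (n : ℝ)⁻¹ * ∑ i, p.eval (x i) = ∫ t, p.eval t ∂σ := by
  have hp' : p.natDegree < k + 1 := Nat.lt_succ_of_le hp
  simp_rw [eval_eq_sum_range' hp']
  rw [integral_finsetSum _ fun j hj ↦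
      (hint j (Nat.lt_succ_iff.mp (Finset.mem_range.mp hj))).const_mul _,
    Finset.sum_comm, Finset.mul_sum]
  refine Finset.sum_congr rfl fun j hj ↦ ?_
  rw [← Finset.mul_sum, integral_const_mul,
    ← hx.inv_mul_sum_pow_eq_integral hn (Nat.lt_succ_iff.mp (Finset.mem_range.mp hj))]
  ring

theorem one_sub_pow_le_mul_integral [IsProbabilityMeasure σ] (hx : IsChebyshevQuadrature σ k x)
    (hn : n ≠ 0) (hint : ∀ j ≤ k, Integrable (fun t ↦ t ^ j) σ) {m : ℕ} (hm : Even m)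
    (hmk : m + 1 ≤ k) {γ : ℝ} (hγ : γ ≤ 1)
    (hpos : 0 < ∫ t, (γ - t) * (1 - t) ^ m ∂σ) :
    (1 - γ) ^ m ≤ n * ∫ t, (1 - t) ^ m ∂σ := by
  have hD := hx.inv_mul_sum_eval_eq_integral hn hint (p := (C γ - X) * (1 - X) ^ m)
    (by compute_degree; omega)
  have hS := hx.inv_mul_sum_eval_eq_integral hn hint (p := (1 - X) ^ m)
    (by compute_degree; omega)
  simp only [eval_mul, eval_sub, eval_C, eval_X, eval_pow, eval_one] at hD hS
  obtain ⟨i, hi⟩ : ∃ i, 0 < (γ - x i) * (1 - x i) ^ m := by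
    by_contra! h
    rw [← hD] at hpos
    exact hpos.not_ge
      (mul_nonpos_of_nonneg_of_nonpos (by positivity) (Finset.sum_nonpos fun i _ ↦ h i))
  have hxi : x i < γ := by
    by_contra! h
    nlinarith [hm.pow_nonneg (1 - x i)]
  calc (1 - γ) ^ m ≤ (1 - x i) ^ m := pow_le_pow_left₀ (by linarith) (by linarith) m
    _ ≤ ∑ j, (1 - x j) ^ m :=
      Finset.single_le_sum (f := fun j ↦ (1 - x j) ^ m) (fun j _ ↦ hm.pow_nonneg _)
        (Finset.mem_univ i)
    _ = n * ∫ t, (1 - t) ^ m ∂σ := by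
      rw [← hS, ← mul_assoc, mul_inv_cancel₀ (Nat.cast_ne_zero.2 hn), one_mul]

end IsChebyshevQuadrature

noncomputable def twoStepMeasure (a η b : ℝ) : Measure ℝ :=
  ENNReal.ofReal a • volume.restrict (Ioc 0 η) +
    ENNReal.ofReal b • volume.restrict (Ioc (1 / 2) 1)

noncomputable def twoStepDensity (a η b : ℝ) : ℝ → ℝ≥0∞ :=
  (Ioc 0 η).indicator (fun _ ↦ ENNReal.ofReal a) +
    (Ioc (1 / 2) 1).indicator (fun _ ↦ ENNReal.ofReal b)

section TwoStep

variable {a η b : ℝ}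

theorem twoStepMeasure_eq_withDensity (a η b : ℝ) :
    twoStepMeasure a η b = volume.withDensity (twoStepDensity a η b) := by
  rw [twoStepDensity, withDensity_add_left (measurable_const.indicator measurableSet_Ioc),
    withDensity_indicator measurableSet_Ioc, withDensity_indicator measurableSet_Ioc,
    withDensity_const, withDensity_const, twoStepMeasure]

theorem twoStepDensity_le (a η b : ℝ) (t : ℝ) :
    twoStepDensity a η b t ≤ ENNReal.ofReal a + ENNReal.ofReal b :=
  add_le_add (indicator_le_self' (fun _ _ ↦ zero_le) t)
    (indicator_le_self' (fun _ _ ↦ zero_le) t)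

theorem twoStepMeasure_Icc (hη : η ≤ 1) :
    twoStepMeasure a η b (Icc 0 1) = twoStepMeasure a η b univ := by
  simp only [twoStepMeasure, Measure.add_apply, Measure.smul_apply, Measure.restrict_apply_univ,
    Measure.restrict_apply_superset (Ioc_subset_Icc_self.trans (Icc_subset_Icc le_rfl hη)),
    Measure.restrict_apply_superset (Ioc_subset_Icc_self.trans
      (Icc_subset_Icc (by norm_num : (0 : ℝ) ≤ 1 / 2) le_rfl))]

theorem isProbabilityMeasure_twoStepMeasure (ha : 0 ≤ a) (hη : 0 ≤ η) (hb : 0 ≤ b)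
    (h : a * η + b / 2 = 1) : IsProbabilityMeasure (twoStepMeasure a η b) := by
  constructor
  simp only [twoStepMeasure, Measure.add_apply, Measure.smul_apply, Measure.restrict_apply_univ,
    Real.volume_Ioc, smul_eq_mul]
  rw [← ENNReal.ofReal_mul ha, ← ENNReal.ofReal_mul hb, ← ENNReal.ofReal_add (by positivity)
    (by norm_num; positivity), ← ENNReal.ofReal_one]
  congr 1
  linarith

theorem integrable_twoStepMeasure {h : ℝ → ℝ} (hh : Continuous h) :
    Integrable h (twoStepMeasure a η b) :=
  integrable_add_measure.2 ⟨hh.integrableOn_Ioc.smul_measure ENNReal.ofReal_ne_top,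
    hh.integrableOn_Ioc.smul_measure ENNReal.ofReal_ne_top⟩

theorem integral_twoStepMeasure (ha : 0 ≤ a) (hb : 0 ≤ b) {h : ℝ → ℝ}
    (hh : Continuous h) :
    ∫ t, h t ∂twoStepMeasure a η b =
      a * (∫ t in Ioc 0 η, h t) + b * ∫ t in Ioc (1 / 2) 1, h t := by
  rw [twoStepMeasure, integral_add_measure
    (hh.integrableOn_Ioc.smul_measure ENNReal.ofReal_ne_top)
    (hh.integrableOn_Ioc.smul_measure ENNReal.ofReal_ne_top), integral_smul_measure,
    integral_smul_measure, ENNReal.toReal_ofReal ha, ENNReal.toReal_ofReal hb, smul_eq_mul,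
    smul_eq_mul]

theorem abs_setIntegral_Ioc_le {h : ℝ → ℝ} {c l r : ℝ} (hlr : l ≤ r)
    (hh : ∀ t ∈ Ioc l r, |h t| ≤ c) : |∫ t in Ioc l r, h t| ≤ c * (r - l) := by
  simpa [Real.volume_real_Ioc_of_le hlr] using
    norm_setIntegral_le_of_norm_le_const (μ := volume) measure_Ioc_lt_top
      fun t ht ↦ (Real.norm_eq_abs _).trans_le (hh t ht)

theorem abs_one_sub_pow_le_of_mem_Ioc {t : ℝ} (ht : t ∈ Ioc (1 / 2) 1) (m : ℕ) :
    |(1 - t) ^ m| ≤ (1 / 2) ^ m := by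
  rw [abs_of_nonneg (pow_nonneg (by linarith [ht.2]) _)]
  exact pow_le_pow_left₀ (by linarith [ht.2]) (by linarith [ht.1]) m

theorem integral_twoStepMeasure_one_sub_pow_le (ha : 0 ≤ a) (hb : 0 ≤ b) (hη₀ : 0 ≤ η)
    (hη₁ : η ≤ 1) (m : ℕ) :
    ∫ t, (1 - t) ^ m ∂twoStepMeasure a η b ≤ a * η + b * (1 / 2) ^ (m + 1) := by
  rw [integral_twoStepMeasure ha hb (by fun_prop)]
  have hI := abs_setIntegral_Ioc_le (h := fun t ↦ (1 - t) ^ m) (c := 1) hη₀ fun t ht ↦ by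
    rw [abs_of_nonneg (pow_nonneg (by linarith [ht.2]) _)]
    exact pow_le_one₀ (by linarith [ht.2]) (by linarith [ht.1])
  have hJ := abs_setIntegral_Ioc_le (by norm_num) fun t ht ↦ abs_one_sub_pow_le_of_mem_Ioc ht m
  calc a * (∫ t in Ioc 0 η, (1 - t) ^ m) + b * ∫ t in Ioc (1 / 2) 1, (1 - t) ^ m
      ≤ a * (1 * (η - 0)) + b * ((1 / 2) ^ m * (1 - 1 / 2)) := by
        gcongr
        exacts [(le_abs_self _).trans hI, (le_abs_self _).trans hJ]
    _ = a * η + b * (1 / 2) ^ (m + 1) := by ring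

theorem le_integral_twoStepMeasure_sub_mul_one_sub_pow (ha : 0 ≤ a) (hb : 0 ≤ b) {γ : ℝ}
    (hη₀ : 0 ≤ η) (hηγ : η ≤ γ) (hγ : γ ≤ 1) (m : ℕ) :
    a * η * ((γ - η) * (1 - η) ^ m) - b * (1 / 2) ^ (m + 1) ≤
      ∫ t, (γ - t) * (1 - t) ^ m ∂twoStepMeasure a η b := by
  rw [integral_twoStepMeasure ha hb (by fun_prop)]
  have hI := setIntegral_ge_of_const_le_real (μ := volume) (f := fun t ↦ (γ - t) * (1 - t) ^ m)
    (c := (γ - η) * (1 - η) ^ m) (measurableSet_Ioc (a := 0) (b := η)) measure_Ioc_lt_top.ne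
    (fun t ht ↦ mul_le_mul (by linarith [ht.2])
      (pow_le_pow_left₀ (by linarith) (by linarith [ht.2]) m) (pow_nonneg (by linarith) m)
      (by linarith [ht.2]))
    (Continuous.integrableOn_Ioc (by fun_prop))
  rw [Real.volume_real_Ioc_of_le hη₀, sub_zero] at hI
  have hJ := abs_setIntegral_Ioc_le (h := fun t ↦ (γ - t) * (1 - t) ^ m) (c := 1 * (1 / 2) ^ m)
    (l := 1 / 2) (r := 1) (by norm_num) fun t ht ↦ by
      rw [abs_mul]
      exact mul_le_mul (abs_le.2 ⟨by linarith [ht.2], by linarith [ht.1]⟩)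
        (abs_one_sub_pow_le_of_mem_Ioc ht m) (abs_nonneg _) zero_le_one
  calc a * η * ((γ - η) * (1 - η) ^ m) - b * (1 / 2) ^ (m + 1)
      = a * ((γ - η) * (1 - η) ^ m * η) + b * -(1 * (1 / 2) ^ m * (1 - 1 / 2)) := by ring
    _ ≤ a * (∫ t in Ioc 0 η, (γ - t) * (1 - t) ^ m) +
          b * ∫ t in Ioc (1 / 2) 1, (γ - t) * (1 - t) ^ m :=
        add_le_add (mul_le_mul_of_nonneg_left hI ha)
          (mul_le_mul_of_nonneg_left (neg_le_of_abs_le hJ) hb)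

theorem integral_twoStepMeasure_id_pos (ha : 0 ≤ a) (hb : 0 < b) :
    0 < ∫ t, t ∂twoStepMeasure a η b := by
  rw [integral_twoStepMeasure ha hb.le continuous_id']
  have hI : 0 ≤ ∫ t in Ioc 0 η, t := setIntegral_nonneg measurableSet_Ioc fun t ht ↦ ht.1.le
  have hJ := setIntegral_ge_of_const_le_real (μ := volume) (f := fun t ↦ t) (c := 1 / 2)
    (measurableSet_Ioc (a := 1 / 2) (b := 1))
    measure_Ioc_lt_top.ne (fun t ht ↦ ht.1.le) continuous_id'.integrableOn_Ioc
  rw [Real.volume_real_Ioc_of_le (by norm_num)] at hJ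
  exact add_pos_of_nonneg_of_pos (mul_nonneg ha hI) (mul_pos hb (by linarith))

end TwoStep

open Real

theorem eight_mul_sq_le_pow {r : ℝ} (hr : 27 / 20 ≤ r) {k : ℕ} (hk : 200 ≤ k) :
    8 * (k : ℝ) ^ 2 ≤ r ^ k := by
  refine le_trans ?_ (pow_le_pow_left₀ (by norm_num) hr k)
  induction k, hk using Nat.le_induction with
  | base =>
    calc (8 : ℝ) * (200 : ℕ) ^ 2 ≤ 20 ^ 20 := by norm_num
      _ ≤ ((27 / 20) ^ 10) ^ 20 := pow_le_pow_left₀ (by norm_num) (by norm_num) 20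
      _ = (27 / 20) ^ 200 := by rw [← pow_mul]
  | succ m hm ih =>
    have hm' : (200 : ℝ) ≤ m := by exact_mod_cast hm
    calc 8 * ((m + 1 : ℕ) : ℝ) ^ 2 ≤ 27 / 20 * (8 * (m : ℝ) ^ 2) := by push_cast; nlinarith
      _ ≤ 27 / 20 * (27 / 20) ^ m := by gcongr
      _ = (27 / 20) ^ (m + 1) := by ring

theorem two_div_exp_pow_mul_exp_div_two_pow (k : ℕ) :
    (2 / exp 1) ^ k * (exp 1 / 2) ^ k = 1 := by
  rw [← mul_pow, div_mul_div_comm, mul_comm, div_self (by positivity), one_pow]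

theorem one_div_sq_le_one {k : ℕ} (hk : 1 ≤ k) : 1 / (k : ℝ) ^ 2 ≤ 1 :=
  div_le_one_of_le₀ (one_le_pow₀ (by exact_mod_cast hk)) (by positivity)

namespace ExponentialLowerBound

/-- Chosen so that `blobMass k * (1 / (2 * √k) * (e / 2) ^ k) = 1 / 2`. -/
noncomputable def blobMass (k : ℕ) : ℝ := √k * (2 / exp 1) ^ k

noncomputable def blobWidth (k : ℕ) : ℝ := blobMass k / k

noncomputable def measure (k : ℕ) : Measure ℝ :=
  twoStepMeasure k (blobWidth k) (2 * (1 - blobMass k))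

noncomputable def density (k : ℕ) : ℝ → ℝ≥0∞ :=
  twoStepDensity k (blobWidth k) (2 * (1 - blobMass k))

variable {k : ℕ}

theorem blobMass_pos (hk : 1 ≤ k) : 0 < blobMass k := by
  have : (0 : ℝ) < k := by exact_mod_cast hk
  unfold blobMass
  positivity

theorem two_mul_mul_blobMass_le (hk : 200 ≤ k) : 2 * k * blobMass k ≤ 1 := by
  have hsqrt : √(k : ℝ) ≤ k :=
    sqrt_le_self_iff.2 (Or.inr (by exact_mod_cast (by omega : 1 ≤ k)))
  have hgrowth : 2 * k * √(k : ℝ) ≤ (exp 1 / 2) ^ k := by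
    nlinarith [k.cast_nonneg (α := ℝ),
      eight_mul_sq_le_pow (r := exp 1 / 2) (by linarith [exp_one_gt_d9]) hk]
  calc 2 * k * blobMass k = 2 * k * √(k : ℝ) * (2 / exp 1) ^ k := by rw [blobMass]; ring
    _ ≤ (exp 1 / 2) ^ k * (2 / exp 1) ^ k := by gcongr
    _ = 1 := by rw [mul_comm, two_div_exp_pow_mul_exp_div_two_pow]

theorem blobMass_le_half (hk : 200 ≤ k) : blobMass k ≤ 1 / 2 := by
  have hK : (200 : ℝ) ≤ k := by exact_mod_cast hk
  nlinarith [two_mul_mul_blobMass_le hk, blobMass_pos (by omega : 1 ≤ k)]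

theorem bulkDensity_pos (hk : 200 ≤ k) : 0 < 2 * (1 - blobMass k) := by
  linarith [blobMass_le_half hk]

theorem eight_mul_sq_mul_half_pow_lt (hk : 200 ≤ k) :
    8 * k ^ 2 * (1 / 2) ^ k < blobMass k := by
  have hK : (200 : ℝ) ≤ k := by exact_mod_cast hk
  have hsqrt : 1 < √(k : ℝ) := lt_sqrt zero_le_one |>.2 (by linarith)
  have hgrowth := eight_mul_sq_le_pow (r := 4 / exp 1)
    (by rw [le_div_iff₀ (exp_pos 1)]; linarith [exp_one_lt_d9]) hk
  calc 8 * (k : ℝ) ^ 2 * (1 / 2) ^ k < √(k : ℝ) * (8 * k ^ 2 * (1 / 2) ^ k) := by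
        rw [lt_mul_iff_one_lt_left (by positivity)]; exact hsqrt
    _ ≤ √(k : ℝ) * ((4 / exp 1) ^ k * (1 / 2) ^ k) := by gcongr
    _ = blobMass k := by rw [blobMass, ← mul_pow]; congr 2; ring

theorem exp_div_two_pow_mul_le (hk : 200 ≤ k) :
    1 / (2 * √(k : ℝ)) * (exp 1 / 2) ^ k * (blobMass k + 2 * (1 / 2) ^ k) ≤
      (1 - 1 / (k : ℝ) ^ 2) ^ (k - 1) := by
  have hK : (200 : ℝ) ≤ k := by exact_mod_cast hk
  have hsqrt : 1 ≤ √(k : ℝ) := one_le_sqrt.2 (by linarith)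
  have hblob : 1 / (2 * √(k : ℝ)) * (exp 1 / 2) ^ k * blobMass k = 1 / 2 := by
    rw [blobMass, mul_comm (√(k : ℝ)), ← mul_assoc, mul_assoc _ _ ((2 / exp 1) ^ k),
      mul_comm _ ((2 / exp 1) ^ k), two_div_exp_pow_mul_exp_div_two_pow]
    field_simp
  have htail : 1 / (2 * √(k : ℝ)) * (exp 1 / 2) ^ k * (2 * (1 / 2) ^ k) ≤ 1 / 4 :=
    calc 1 / (2 * √(k : ℝ)) * (exp 1 / 2) ^ k * (2 * (1 / 2) ^ k)
        = (exp 1 / 4) ^ k / √(k : ℝ) := by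
          rw [div_pow, div_pow, div_pow, one_pow,
            show (4 : ℝ) ^ k = 2 ^ k * 2 ^ k by rw [← mul_pow]; norm_num]
          field_simp
      _ ≤ (exp 1 / 4) ^ k := div_le_self (by positivity) hsqrt
      _ ≤ (exp 1 / 4) ^ 4 :=
          pow_le_pow_of_le_one (by positivity) (by linarith [exp_one_lt_d9]) (by omega)
      _ ≤ (7 / 10) ^ 4 := pow_le_pow_left₀ (by positivity) (by linarith [exp_one_lt_d9]) 4
      _ ≤ 1 / 4 := by norm_num
  have hbern := one_add_mul_le_pow (a := -(1 / (k : ℝ) ^ 2))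
    (by linarith [one_div_sq_le_one (by omega : 1 ≤ k)]) (k - 1)
  have hcast : ((k - 1 : ℕ) : ℝ) ≤ k := by exact_mod_cast Nat.sub_le k 1
  have hsmall : ((k - 1 : ℕ) : ℝ) * (1 / (k : ℝ) ^ 2) ≤ 1 / 200 := by
    rw [mul_one_div, div_le_div_iff₀ (by positivity) (by norm_num)]
    nlinarith
  rw [← sub_eq_add_neg] at hbern
  rw [mul_add, hblob]
  linarith

theorem mul_blobWidth (hk : 1 ≤ k) : k * blobWidth k = blobMass k :=
  mul_div_cancel₀ _ (by positivity)

theorem blobWidth_nonneg (hk : 1 ≤ k) : 0 ≤ blobWidth k :=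
  div_nonneg (blobMass_pos hk).le k.cast_nonneg

theorem blobWidth_le (hk : 200 ≤ k) : blobWidth k ≤ 1 / (k : ℝ) ^ 2 / 2 := by
  have hK : (0 : ℝ) < k := by positivity
  rw [blobWidth, div_le_iff₀ hK]
  have := two_mul_mul_blobMass_le hk
  field_simp
  linarith

theorem blobWidth_le_one (hk : 200 ≤ k) : blobWidth k ≤ 1 :=
  (div_le_self (blobMass_pos (by omega)).le (by exact_mod_cast (by omega : 1 ≤ k))).trans
    ((blobMass_le_half hk).trans (by norm_num))

theorem one_half_le_one_sub_blobWidth_pow (hk : 200 ≤ k) :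
    1 / 2 ≤ (1 - blobWidth k) ^ (k - 1) := by
  have hbern := one_add_mul_le_pow (a := -blobWidth k)
    (by linarith [blobWidth_le_one hk]) (k - 1)
  have hcast : ((k - 1 : ℕ) : ℝ) ≤ k := by exact_mod_cast Nat.sub_le k 1
  have := mul_le_mul_of_nonneg_right hcast (blobWidth_nonneg (k := k) (by omega))
  rw [mul_blobWidth (by omega)] at this
  rw [← sub_eq_add_neg] at hbern
  linarith [blobMass_le_half hk]

theorem isProbabilityMeasure_measure (hk : 200 ≤ k) : IsProbabilityMeasure (measure k) :=
  isProbabilityMeasure_twoStepMeasure k.cast_nonneg (blobWidth_nonneg (by omega))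
    (bulkDensity_pos hk).le (by rw [mul_blobWidth (by omega)]; ring)

theorem measure_Icc (hk : 200 ≤ k) : measure k (Icc 0 1) = 1 := by
  have := isProbabilityMeasure_measure hk
  rw [measure, twoStepMeasure_Icc (blobWidth_le_one hk), ← measure, measure_univ]

theorem density_le (hk : 200 ≤ k) (t : ℝ) : density k t ≤ ENNReal.ofReal (200 * k) := by
  have hK : (200 : ℝ) ≤ k := by exact_mod_cast hk
  refine (twoStepDensity_le _ _ _ t).trans ?_
  rw [← ENNReal.ofReal_add k.cast_nonneg (bulkDensity_pos hk).le]
  exact ENNReal.ofReal_le_ofReal (by linarith [blobMass_pos (by omega : 1 ≤ k)])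

theorem integrable_pow (j : ℕ) : Integrable (fun t : ℝ ↦ t ^ j) (measure k) :=
  integrable_twoStepMeasure (continuous_pow j)

theorem integral_id_pos (hk : 200 ≤ k) : 0 < ∫ t, t ∂measure k :=
  integral_twoStepMeasure_id_pos k.cast_nonneg (bulkDensity_pos hk)

theorem integral_one_sub_pow_le (hk : 200 ≤ k) :
    ∫ t, (1 - t) ^ (k - 1) ∂measure k ≤ blobMass k + 2 * (1 / 2) ^ k := by
  have h := integral_twoStepMeasure_one_sub_pow_le k.cast_nonneg (bulkDensity_pos hk).le
    (blobWidth_nonneg (by omega)) (blobWidth_le_one hk) (k - 1)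
  rw [mul_blobWidth (by omega), Nat.sub_add_cancel (by omega)] at h
  have : 0 ≤ (1 / 2 : ℝ) ^ k := by positivity
  exact h.trans (by nlinarith [blobMass_pos (by omega : 1 ≤ k)])

theorem integral_sub_mul_one_sub_pow_pos (hk : 200 ≤ k) :
    0 < ∫ t, (1 / (k : ℝ) ^ 2 - t) * (1 - t) ^ (k - 1) ∂measure k := by
  have hw := blobMass_pos (by omega : 1 ≤ k)
  have hη := blobWidth_le hk
  have hγ : 0 < 1 / (k : ℝ) ^ 2 := by positivity
  have h := le_integral_twoStepMeasure_sub_mul_one_sub_pow (γ := 1 / (k : ℝ) ^ 2)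
    k.cast_nonneg (bulkDensity_pos hk).le (blobWidth_nonneg (k := k) (by omega)) (by linarith)
    (one_div_sq_le_one (by omega)) (k - 1)
  rw [mul_blobWidth (by omega), Nat.sub_add_cancel (by omega)] at h
  refine lt_of_lt_of_le ?_ h
  have hblob : 1 / (4 * (k : ℝ) ^ 2) ≤
      (1 / (k : ℝ) ^ 2 - blobWidth k) * (1 - blobWidth k) ^ (k - 1) :=
    calc 1 / (4 * (k : ℝ) ^ 2) = 1 / (k : ℝ) ^ 2 / 2 * (1 / 2) := by ring
      _ ≤ _ := mul_le_mul (by linarith) (one_half_le_one_sub_blobWidth_pow hk) (by norm_num)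
          (by linarith)
  have hbulk : 2 * (1 / 2) ^ k < blobMass k * (1 / (4 * (k : ℝ) ^ 2)) := by
    rw [mul_one_div, lt_div_iff₀ (by positivity)]
    linarith [eight_mul_sq_mul_half_pow_lt hk]
  have hhalf : (0 : ℝ) < (1 / 2) ^ k := by positivity
  nlinarith [mul_le_mul_of_nonneg_left hblob hw.le]

end ExponentialLowerBound

open ExponentialLowerBound in
/-- There is a constant `C > 0` such that for every odd integer `k > C` there is a probability
measure `σ_k` on `[0,1]`, absolutely continuous with density essentially bounded by `C·k`,
such that every Chebyshev-type quadrature for `σ_k` of degree at least `k` with `n` nodes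
satisfies `n ≥ (1/(2√k))·(e/2)^k`. -/
theorem exponential_lower_bound_example :
    ∃ C : ℝ, 0 < C ∧ ∀ k : ℕ, Odd k → C < (k : ℝ) →
      ∃ (σ : Measure ℝ) (f : ℝ → ℝ≥0∞), IsProbabilityMeasure σ ∧
        σ (Set.Icc (0 : ℝ) 1) = 1 ∧ σ = volume.withDensity f ∧
        (∀ᵐ x ∂volume, f x ≤ ENNReal.ofReal (C * k)) ∧
        ∀ (n : ℕ) (x : Fin n → ℝ),
          (∀ j : ℕ, 1 ≤ j → j ≤ k → (n : ℝ)⁻¹ * ∑ i, x i ^ j = ∫ t, t ^ j ∂σ) →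
          1 / (2 * Real.sqrt k) * (Real.exp 1 / 2) ^ k ≤ (n : ℝ) := by
  refine ⟨200, by norm_num, fun k hodd hk ↦ ?_⟩
  replace hk : 200 ≤ k := by exact_mod_cast hk.le
  have hσ := isProbabilityMeasure_measure hk
  refine ⟨measure k, density k, hσ, measure_Icc hk, twoStepMeasure_eq_withDensity _ _ _,
    ae_of_all _ (density_le hk), fun n x hx ↦ ?_⟩
  have hn : n ≠ 0 := IsChebyshevQuadrature.ne_zero hx (by omega) (integral_id_pos hk).ne'
  have hB : 0 < blobMass k + 2 * (1 / 2) ^ k := by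
    have := blobMass_pos (by omega : 1 ≤ k)
    positivity
  refine le_of_mul_le_mul_right ?_ hB
  calc _ ≤ (1 - 1 / (k : ℝ) ^ 2) ^ (k - 1) := exp_div_two_pow_mul_le hk
    _ ≤ n * ∫ t, (1 - t) ^ (k - 1) ∂measure k :=
      IsChebyshevQuadrature.one_sub_pow_le_mul_integral hx hn (fun j _ ↦ integrable_pow j)
        (Nat.Odd.sub_odd hodd odd_one) (by omega) (one_div_sq_le_one (by omega))
        (integral_sub_mul_one_sub_pow_pos hk)
    _ ≤ n * (blobMass k + 2 * (1 / 2) ^ k) := by gcongr; exact integral_one_sub_pow_le hk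
end

section
/- Let σ be a probability measure on ℝ^d and let n ≥ 1, k ≥ 1 be integers, with ∫ |x^α| dσ(x) < ∞ for every multi-index α with 0 < |α| ≤ k. Suppose that for every ε > 0 the product measure σ^{⊗n} on (ℝ^d)^n gives positive measure to the set of tuples (x₁,…,xₙ) satisfying |(1/n)·∑_{i=1}^n x_i^α − ∫ x^α dσ(x)| ≤ ε/√n for every multi-index α with 0 < |α| ≤ k. Then there exist (not necessarily distinct) points x₁,…,xₙ ∈ ℝ^d such that (1/n)·∑_{i=1}^n x_i^α = ∫ x^α dσ(x) for every multi-index α with 0 < |α| ≤ k. -/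
/-!
Call `x : Fin n → ℝ^d` a `δ`-approximate cubature when every empirical moment of order
`1, …, k` is within `δ` of the corresponding moment of `σ`. These sets are closed, shrink with
`δ`, and by hypothesis are nonempty for `δ > 0`. For `k ≥ 2` the bound on the empirical second
moments `(1/n) ∑ᵢ xᵢⱼ²` bounds every coordinate, so the sets are compact and their intersection,
the set of exact cubatures, is nonempty. For `k = 1` it suffices to put all `n` nodes at the mean
of `σ`.
-/

open MeasureTheory Set

theorem IsCompact.exists_forall_mem_of_monotone {X : Type*} [TopologicalSpace X]
    {S : ℝ → Set X} {δ₀ : ℝ} (hcpt : IsCompact (S δ₀)) (hδ₀ : 0 < δ₀) (hmono : Monotone S)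
    (hclosed : ∀ δ, IsClosed (S δ)) (hne : ∀ δ, 0 < δ → (S δ).Nonempty) :
    ∃ x, ∀ δ, 0 < δ → x ∈ S δ := by
  obtain ⟨x, hx⟩ := IsCompact.nonempty_iInter_of_sequence_nonempty_isCompact_isClosed
    (fun p : ℕ => S (δ₀ / (p + 1)))
    (fun p => hmono <| div_le_div_of_nonneg_left hδ₀.le (by positivity) (by push_cast; linarith))
    (fun p => hne _ (by positivity)) (by simpa using hcpt) (fun p => hclosed _)
  refine ⟨x, fun δ hδ => ?_⟩
  obtain ⟨p, hp⟩ := exists_nat_one_div_lt (div_pos hδ hδ₀)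
  refine hmono ?_ (mem_iInter.mp hx p)
  calc δ₀ / (p + 1) = 1 / (p + 1) * δ₀ := by ring
    _ ≤ δ := ((lt_div_iff₀ hδ₀).mp hp).le

theorem Finset.exists_eq_pi_single_of_sum_eq_one {ι : Type*} [Fintype ι] [DecidableEq ι]
    {α : ι → ℕ} (h : ∑ i, α i = 1) : ∃ j, α = Pi.single j 1 := by
  obtain ⟨j, hj⟩ := (Finsupp.sum_eq_one_iff (Finsupp.equivFunOnFinite.symm α)).mp
    (by rwa [Finsupp.sum_fintype _ _ fun _ => rfl])
  exact ⟨j, by simpa [Finsupp.single_eq_pi_single] using congrArg (⇑) hj⟩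

theorem Finset.prod_pow_pi_single {ι R : Type*} [Fintype ι] [DecidableEq ι] [CommMonoid R]
    (y : ι → R) (j : ι) (e : ℕ) : ∏ q, y q ^ (Pi.single j e : ι → ℕ) q = y j ^ e := by
  rw [Finset.prod_eq_single j (fun q _ hq => by simp [hq]) (by simp)]
  simp

section Cubature

variable {ι : Type*} [Fintype ι] {n : ℕ}

noncomputable def empiricalMoment (x : Fin n → ι → ℝ) (α : ι → ℕ) : ℝ :=
  (n : ℝ)⁻¹ * ∑ i, ∏ q, x i q ^ α q

noncomputable def moment (σ : Measure (ι → ℝ)) (α : ι → ℕ) : ℝ :=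
  ∫ y, ∏ q, y q ^ α q ∂σ

def approxCubatures (σ : Measure (ι → ℝ)) (n k : ℕ) (δ : ℝ) : Set (Fin n → ι → ℝ) :=
  {x | ∀ α : ι → ℕ, 0 < ∑ i, α i → ∑ i, α i ≤ k → |empiricalMoment x α - moment σ α| ≤ δ}

variable {σ : Measure (ι → ℝ)} {k : ℕ}

theorem approxCubatures_mono : Monotone (approxCubatures σ n k) :=
  fun _ _ h _ hx α h0 hk => (hx α h0 hk).trans h

theorem isClosed_approxCubatures (δ : ℝ) : IsClosed (approxCubatures σ n k δ) := by
  simp only [approxCubatures, ofPred_forall]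
  refine isClosed_iInter fun α => isClosed_iInter fun _ => isClosed_iInter fun _ => ?_
  exact isClosed_le (by unfold empiricalMoment; fun_prop) continuous_const

theorem abs_le_sqrt_of_mem_approxCubatures [DecidableEq ι] (hk : 2 ≤ k) {δ : ℝ}
    {x : Fin n → ι → ℝ} (hx : x ∈ approxCubatures σ n k δ) (i : Fin n) (j : ι) :
    |x i j| ≤ √(n * (moment σ (Pi.single j 2) + δ)) := by
  have hn : (0 : ℝ) < n := by exact_mod_cast i.pos
  have hmom := (abs_le.mp (hx (Pi.single j 2) (by simp) (by simpa using hk))).2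
  apply Real.abs_le_sqrt
  calc x i j ^ 2 ≤ ∑ i', x i' j ^ 2 :=
        Finset.single_le_sum (fun i' _ => sq_nonneg (x i' j)) (Finset.mem_univ i)
    _ = n * empiricalMoment x (Pi.single j 2) := by
        simp only [empiricalMoment, Finset.prod_pow_pi_single]
        field_simp
    _ ≤ n * (moment σ (Pi.single j 2) + δ) := by gcongr; linarith

theorem isCompact_approxCubatures (hk : 2 ≤ k) (δ : ℝ) :
    IsCompact (approxCubatures σ n k δ) := by
  classical
  set C : ι → ℝ := fun j => √(n * (moment σ (Pi.single j 2) + δ))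
  refine (isCompact_univ_pi fun _ => isCompact_univ_pi fun j => isCompact_Icc (a := -C j)
    (b := C j)).of_isClosed_subset (isClosed_approxCubatures δ) fun x hx => ?_
  simp only [mem_univ_pi, mem_Icc, ← abs_le]
  exact abs_le_sqrt_of_mem_approxCubatures hk hx

theorem exists_cubature_of_le_one [DecidableEq ι] (hn : 0 < n) (σ : Measure (ι → ℝ))
    (hk : k ≤ 1) : ∃ x : Fin n → ι → ℝ, ∀ α : ι → ℕ, 0 < ∑ i, α i → ∑ i, α i ≤ k →
      empiricalMoment x α = moment σ α := by
  refine ⟨fun _ j => moment σ (Pi.single j 1), fun α h0 hk' => ?_⟩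
  obtain ⟨j, rfl⟩ := Finset.exists_eq_pi_single_of_sum_eq_one (show ∑ i, α i = 1 by omega)
  simp only [empiricalMoment, Finset.prod_pow_pi_single, pow_one, Finset.sum_const,
    Finset.card_univ, Fintype.card_fin, nsmul_eq_mul]
  field_simp

end Cubature

theorem small_ball_to_cubature_general
    (d n k : ℕ) (hn : 1 ≤ n)
    (σ : Measure (Fin d → ℝ))
    (hball : ∀ ε : ℝ, 0 < ε →
      0 < (Measure.pi fun _ : Fin n => σ)
        {ω : Fin n → Fin d → ℝ | ∀ α : Fin d → ℕ, 0 < ∑ i, α i → ∑ i, α i ≤ k →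
          |(n : ℝ)⁻¹ * ∑ i, ∏ q, ω i q ^ α q - ∫ y, ∏ q, y q ^ α q ∂σ| ≤
            ε / Real.sqrt n}) :
    ∃ x : Fin n → Fin d → ℝ, ∀ α : Fin d → ℕ, 0 < ∑ i, α i → ∑ i, α i ≤ k →
      (n : ℝ)⁻¹ * ∑ i, ∏ q, x i q ^ α q = ∫ y, ∏ q, y q ^ α q ∂σ := by
  rcases le_or_gt k 1 with hk | hk
  · exact exists_cubature_of_le_one hn σ hk
  have hsqrt : 0 < √(n : ℝ) := Real.sqrt_pos.mpr (by exact_mod_cast hn)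
  have hne : ∀ δ, 0 < δ → (approxCubatures σ n k δ).Nonempty := fun δ hδ => by
    have := nonempty_of_measure_ne_zero (hball (δ * √n) (by positivity)).ne'
    rwa [mul_div_cancel_right₀ _ hsqrt.ne'] at this
  obtain ⟨x, hx⟩ := (isCompact_approxCubatures hk 1).exists_forall_mem_of_monotone one_pos
    approxCubatures_mono isClosed_approxCubatures hne
  exact ⟨x, fun α h0 hk' => eq_of_forall_dist_le fun δ hδ => hx δ hδ α h0 hk'⟩

/-- If for every `ε > 0` the event that `n` i.i.d. samples from `σ` have all multi-moments of
order up to `k` within `ε/√n` of those of `σ` has positive probability, then there exists a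
Chebyshev-type cubature for `σ` of degree at least `k` with exactly `n` nodes. -/
theorem small_ball_to_cubature
    (d n k : ℕ) (hd : 1 ≤ d) (hn : 1 ≤ n) (hk : 1 ≤ k)
    (σ : Measure (Fin d → ℝ)) [IsProbabilityMeasure σ]
    (hint : ∀ α : Fin d → ℕ, 0 < ∑ i, α i → ∑ i, α i ≤ k →
      Integrable (fun x => ∏ i, x i ^ α i) σ)
    (hball : ∀ ε : ℝ, 0 < ε →
      0 < (Measure.pi fun _ : Fin n => σ)
        {ω : Fin n → Fin d → ℝ | ∀ α : Fin d → ℕ, 0 < ∑ i, α i → ∑ i, α i ≤ k →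
          |(n : ℝ)⁻¹ * ∑ i, ∏ q, ω i q ^ α q - ∫ y, ∏ q, y q ^ α q ∂σ| ≤
            ε / Real.sqrt n}) :
    ∃ x : Fin n → Fin d → ℝ, ∀ α : Fin d → ℕ, 0 < ∑ i, α i → ∑ i, α i ≤ k →
      (n : ℝ)⁻¹ * ∑ i, ∏ q, x i q ^ α q = ∫ y, ∏ q, y q ^ α q ∂σ :=
  small_ball_to_cubature_general d n k hn σ hball
end

section
/- Let m ≥ 1, k = 2m−1, and let σ be a probability measure on ℝ with ∫|x|^k dσ(x) < ∞. Suppose σ is NOT a purely atomic measure with fewer than m atoms. Then there exist distinct points x₁,…,x_{2m+1} ∈ ℝ and weights λ₁,…,λ_{2m+1} > 0 with ∑_{i=1}^{2m+1} λ_i = 1 such that ∑_{i=1}^{2m+1} λ_i·x_i^j = ∫ x^j dσ(x) for all integers 0 ≤ j ≤ k. -/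
/-!
The hypothesis says that `σ` is not concentrated on fewer than `m` points, so `∫ q² dσ > 0` for
every nonzero polynomial `q` of degree `< m`. This nondegeneracy yields a monic polynomial `P` of
degree `m` orthogonal to all polynomials of degree `< m`. It has `m` distinct real roots:
otherwise, multiplying `P` by the product of the `X - z` over its roots `z` of odd multiplicity
gives a polynomial of degree `< 2m` which has constant sign and is not zero `σ`-almost everywhere,
yet has integral zero. Gauss quadrature at these roots is exact in degree `2m - 1`, and its weights
`∫ ℓ_z dσ = ∫ ℓ_z² dσ` are positive.

To get `2m + 1` nodes, interlace the `m` Gauss nodes with `m + 1` new ones. The nodal weights of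
the `2m + 1` nodes (the coefficients of the divided difference of order `2m`) annihilate
polynomials of degree `< 2m` and alternate in sign, being positive at the new nodes. Adding a small
positive multiple of them to the Gauss weights, extended by zero, makes every weight positive
without changing the quadrature.
-/

open MeasureTheory Polynomial Finset Filter Topology Lagrange
open scoped ENNReal

namespace Quadrature

theorem degree_mul_lt_of_le_of_lt {R : Type*} [Semiring R] {p q : R[X]} {a b : ℕ}
    (hp : p.degree ≤ a) (hq : q.degree < b) : (p * q).degree < ↑(a + b) := by
  refine (degree_mul_le p q).trans_lt ?_
  rcases eq_or_ne p.degree ⊥ with h | h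
  · simp [h]
  · push_cast
    exact WithBot.add_lt_add_of_le_of_lt h hp hq

theorem mul_nonneg_of_continuous_of_ne_zero {g : ℝ → ℝ} (hg : Continuous g)
    (h : ∀ x, g x ≠ 0) (x y : ℝ) : 0 ≤ g x * g y := by
  by_contra! hxy
  have h0 : (0 : ℝ) ∈ Set.uIcc (g x) (g y) := by
    rcases mul_neg_iff.1 hxy with ⟨hx, hy⟩ | ⟨hx, hy⟩
    · exact Set.mem_uIcc.2 (Or.inr ⟨hy.le, hx.le⟩)
    · exact Set.mem_uIcc.2 (Or.inl ⟨hx.le, hy.le⟩)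
  obtain ⟨c, -, hc⟩ := intermediate_value_uIcc hg.continuousOn h0
  exact h c hc

theorem eval_mul_eval_nonneg_of_even_count_roots {f : ℝ[X]}
    (hf : ∀ z, Even (f.roots.count z)) (x y : ℝ) : 0 ≤ f.eval x * f.eval y := by
  induction hn : f.natDegree using Nat.strong_induction_on generalizing f with
  | _ n ih =>
  by_cases hroot : ∃ z, f ≠ 0 ∧ f.IsRoot z
  · obtain ⟨z, hf0, hz⟩ := hroot
    have h2 : 2 ≤ f.roots.count z := by
      have hpos : 0 < f.roots.count z := by rwa [count_roots, rootMultiplicity_pos hf0]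
      obtain ⟨k, hk⟩ := hf z
      omega
    obtain ⟨g, rfl⟩ : (X - C z) ^ 2 ∣ f := by
      rwa [← le_rootMultiplicity_iff hf0, ← count_roots]
    have hg0 : g ≠ 0 := right_ne_zero_of_mul hf0
    have hdeg : g.natDegree < n := by
      rw [← hn, natDegree_mul (pow_ne_zero _ (X_sub_C_ne_zero z)) hg0]
      simp
    have hg : ∀ w, Even (g.roots.count w) := fun w => by
      have := hf w
      rwa [roots_mul hf0, roots_pow, roots_X_sub_C, Multiset.count_add, Multiset.count_nsmul,
        Nat.even_add, iff_true_left (even_two_mul _)] at this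
    calc 0 ≤ ((x - z) * (y - z)) ^ 2 * (g.eval x * g.eval y) :=
          mul_nonneg (sq_nonneg _) (ih _ hdeg hg rfl)
      _ = _ := by simp only [eval_mul, eval_pow, eval_sub, eval_X, eval_C]; ring
  · push Not at hroot
    rcases eq_or_ne f 0 with hf0 | hf0
    · simp [hf0]
    · exact mul_nonneg_of_continuous_of_ne_zero f.continuous (fun w => hroot w hf0) x y

section Functional

variable {K : Type*} [Field K] {L : K[X] →ₗ[K] K}

theorem exists_monic_orthogonal {m : ℕ}
    (hL : ∀ q : K[X], q.degree < m → q ≠ 0 → L (q * q) ≠ 0) :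
    ∃ P : K[X], P.Monic ∧ P.degree = m ∧ ∀ q : K[X], q.degree < m → L (P * q) = 0 := by
  set V := degreeLT K m
  let B : LinearMap.BilinForm K V :=
    ((LinearMap.mul K K[X]).compr₂ L).compl₁₂ V.subtype V.subtype
  have hsep : ∀ p : V, B p p = 0 → p = 0 := fun p hp => by
    by_contra hp0
    exact hL p (mem_degreeLT.1 p.2) (by simpa using hp0) hp
  have hB : B.Nondegenerate := ⟨fun p hp => hsep p (hp p), fun p hp => hsep p (hp p)⟩
  let φ : Module.Dual K V := -(L ∘ₗ LinearMap.mulLeft K (X ^ m) ∘ₗ V.subtype)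
  set p := (B.toDual hB).symm φ
  have hp : (p : K[X]).degree < m := mem_degreeLT.1 p.2
  refine ⟨X ^ m + (p : K[X]), monic_X_pow_add hp, ?_, fun q hq => ?_⟩
  · rw [degree_add_eq_left_of_degree_lt (by rwa [degree_X_pow]), degree_X_pow]
  · have := LinearMap.BilinForm.apply_toDual_symm_apply (hB := hB) φ ⟨q, mem_degreeLT.2 hq⟩
    simp only [B, φ, LinearMap.compl₁₂_apply, LinearMap.compr₂_apply, LinearMap.mul_apply',
      Submodule.subtype_apply, LinearMap.neg_apply, LinearMap.comp_apply,
      LinearMap.mulLeft_apply] at this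
    rw [add_mul, map_add, this, add_neg_cancel]

variable [DecidableEq K]

theorem apply_eq_sum_basis_mul_eval {P : K[X]} {s : Finset K} (hP : P.Monic)
    (hPdeg : P.degree = #s) (hroots : ∀ z ∈ s, P.IsRoot z)
    (horth : ∀ q : K[X], q.degree < #s → L (P * q) = 0) {f : K[X]}
    (hf : f.degree < ↑(2 * #s)) :
    L f = ∑ z ∈ s, L (Lagrange.basis s id z) * f.eval z := by
  have hrem : (f %ₘ P).degree < #s := hPdeg ▸ degree_modByMonic_lt f hP
  have hquo : (f /ₘ P).degree < #s := by
    by_cases hq0 : f /ₘ P = 0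
    · rw [hq0, degree_zero]
      exact WithBot.bot_lt_coe _
    · have hf0 : f ≠ 0 := by
        rintro rfl
        exact hq0 (zero_divByMonic P)
      rw [← natDegree_lt_iff_degree_lt hq0, natDegree_divByMonic f hP,
        natDegree_eq_of_degree_eq_some hPdeg]
      have := (natDegree_lt_iff_degree_lt hf0).2 hf
      omega
  have heval : ∀ z ∈ s, (f %ₘ P).eval z = f.eval z := fun z hz => by
    conv_rhs => rw [← modByMonic_add_div f P]
    rw [eval_add, eval_mul, (hroots z hz).eq_zero, zero_mul, add_zero]
  calc L f = L (f %ₘ P) + L (P * (f /ₘ P)) := by rw [← map_add, modByMonic_add_div]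
    _ = L (f %ₘ P) := by rw [horth _ hquo, add_zero]
    _ = ∑ z ∈ s, L (Lagrange.basis s id z) * (f %ₘ P).eval z := by
      conv_lhs => rw [eq_interpolate Function.injective_id.injOn hrem]
      simp only [interpolate_apply, map_sum, C_mul', map_smul, smul_eq_mul, id]
      exact sum_congr rfl fun z _ => mul_comm _ _
    _ = _ := sum_congr rfl fun z hz => by rw [heval z hz]

theorem apply_basis_pos [LinearOrder K] [IsStrictOrderedRing K] {s : Finset K}
    (hpos : ∀ q : K[X], q.degree < #s → q ≠ 0 → 0 < L (q * q))
    (hexact : ∀ f : K[X], f.degree < ↑(2 * #s) →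
      L f = ∑ z ∈ s, L (Lagrange.basis s id z) * f.eval z)
    {z : K} (hz : z ∈ s) : 0 < L (Lagrange.basis s id z) := by
  have hinj : Set.InjOn id (s : Set K) := Function.injective_id.injOn
  set b := Lagrange.basis s id z
  have hb : b.degree < #s := by
    rw [degree_basis hinj hz]
    exact_mod_cast Nat.sub_lt (card_pos.2 ⟨z, hz⟩) one_pos
  have hself : b.eval z = 1 := eval_basis_self hinj hz
  have hother : ∀ y ∈ s, y ≠ z → b.eval y = 0 := fun y hy hyz =>
    eval_basis_of_ne (v := id) hyz.symm hy
  calc 0 < L (b * b) := hpos b hb (basis_ne_zero hinj hz)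
    _ = L b := by
      rw [hexact _ (two_mul #s ▸ degree_mul_lt_of_le_of_lt hb.le hb), sum_eq_single z]
      · simp [b, hself]
      · exact fun y hy hyz => by simp [hother y hy hyz]
      · exact fun h => absurd hz h

end Functional

theorem exists_eq_sum_smul_dirac {α : Type*} [MeasurableSpace α] [MeasurableSingletonClass α]
    (μ : Measure α) {F : Finset α} (hF : μ (↑F)ᶜ = 0) :
    ∃ n ≤ #F, ∃ (a : Fin n → α) (w : Fin n → ℝ≥0∞),
      Function.Injective a ∧ (∀ i, w i ≠ 0) ∧ μ = ∑ i, w i • Measure.dirac (a i) := by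
  classical
  have hμF : μ = ∑ x ∈ F, μ {x} • Measure.dirac x := by
    ext s hs
    conv_lhs =>
      rw [← Measure.restrict_eq_self_of_ae_mem (ae_iff.2 hF), Measure.restrict_apply hs]
    simp only [Measure.coe_finsetSum, Finset.sum_apply, Measure.smul_apply,
      Measure.dirac_apply' _ hs, Set.indicator_apply, Pi.one_apply, smul_eq_mul, mul_ite,
      mul_one, mul_zero]
    rw [← sum_filter, sum_measure_singleton, coe_filter, Set.inter_comm]
    rfl
  set F' := {x ∈ F | μ {x} ≠ 0}
  have hμF' : μ = ∑ x ∈ F', μ {x} • Measure.dirac x :=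
    hμF.trans (sum_filter_of_ne (p := fun x => μ {x} ≠ 0)
      fun x _ hx h0 => hx (by rw [h0, zero_smul])).symm
  refine ⟨#F', card_filter_le _ _, fun i => F'.equivFin.symm i,
    fun i => μ {↑(F'.equivFin.symm i)}, Subtype.val_injective.comp F'.equivFin.symm.injective,
    fun i => (mem_filter.1 (F'.equivFin.symm i).2).2, ?_⟩
  calc μ = ∑ x ∈ F', μ {x} • Measure.dirac x := hμF'
    _ = ∑ x : F', μ {(x : α)} • Measure.dirac (x : α) := (sum_coe_sort F' _).symm
    _ = _ := (F'.equivFin.symm.sum_comp fun x : F' => μ {(x : α)} • Measure.dirac (x : α)).symm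

section Moments

variable {σ : Measure ℝ}

theorem integrable_pow_of_le [IsFiniteMeasure σ] {n j : ℕ}
    (hint : Integrable (fun x => |x| ^ n) σ) (hj : j ≤ n) :
    Integrable (fun x : ℝ => x ^ j) σ := by
  refine ((integrable_const 1).add hint).mono' (by fun_prop) (ae_of_all _ fun x => ?_)
  rw [norm_pow, Real.norm_eq_abs]
  rcases le_total |x| 1 with hx | hx
  · have := pow_le_one₀ (abs_nonneg x) hx (n := j)
    have := pow_nonneg (abs_nonneg x) n
    simp only [Pi.add_apply]
    linarith
  · have := pow_le_pow_right₀ hx hj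
    simp only [Pi.add_apply]
    linarith

theorem integrable_eval_of_degree_lt {n : ℕ}
    (hmom : ∀ j < n, Integrable (fun x : ℝ => x ^ j) σ) {f : ℝ[X]} (hf : f.degree < n) :
    Integrable (fun x => f.eval x) σ := by
  simp_rw [eval_eq_sum, Polynomial.sum]
  refine integrable_finsetSum _ fun e he => (hmom e ?_).const_mul _
  exact_mod_cast (le_degree_of_ne_zero (mem_support_iff.1 he)).trans_lt hf

/-- Defined through the moments so that it is linear on all of `ℝ[X]`; it is `∫ f dσ` only when
the monomials of `f` are integrable (`momentFunctional_apply`). -/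
noncomputable def momentFunctional (σ : Measure ℝ) : ℝ[X] →ₗ[ℝ] ℝ :=
  Polynomial.lsum fun j => (∫ x, x ^ j ∂σ) • LinearMap.id

theorem momentFunctional_apply {n : ℕ} (hmom : ∀ j < n, Integrable (fun x : ℝ => x ^ j) σ)
    {f : ℝ[X]} (hf : f.degree < n) : momentFunctional σ f = ∫ x, f.eval x ∂σ := by
  simp_rw [eval_eq_sum, Polynomial.sum]
  rw [integral_finsetSum _ fun e he => (hmom e ?_).const_mul _]
  · simp only [momentFunctional, lsum_apply, Polynomial.sum, LinearMap.smul_apply,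
      LinearMap.id_apply, smul_eq_mul, integral_const_mul]
    exact sum_congr rfl fun _ _ => mul_comm _ _
  · exact_mod_cast (le_degree_of_ne_zero (mem_support_iff.1 he)).trans_lt hf

variable {m : ℕ}

theorem le_card_roots_of_integral_eval_eq_zero (hσ : ∀ F : Finset ℝ, σ (↑F)ᶜ = 0 → m ≤ #F)
    {f : ℝ[X]} (hf : f ≠ 0) (hsign : ∀ x y, 0 ≤ f.eval x * f.eval y)
    (hfi : Integrable (fun x => f.eval x) σ) (h0 : ∫ x, f.eval x ∂σ = 0) :
    m ≤ #f.roots.toFinset := by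
  obtain ⟨y, hy⟩ : ∃ y, f.eval y ≠ 0 := by
    by_contra! h
    exact hf (Polynomial.funext (by simpa using h))
  have hae : (fun x => f.eval y * f.eval x) =ᵐ[σ] 0 :=
    (integral_eq_zero_iff_of_nonneg (fun x => hsign y x) (hfi.const_mul _)).1
      (by rw [integral_const_mul, h0, mul_zero])
  refine hσ _ (measure_mono_null (fun x hx => ?_) (ae_iff.1 hae))
  simp only [Set.mem_compl_iff, mem_coe, Multiset.mem_toFinset, mem_roots hf,
    IsRoot.def] at hx
  exact mul_ne_zero hy hx

theorem integral_eval_mul_self_pos (hσ : ∀ F : Finset ℝ, σ (↑F)ᶜ = 0 → m ≤ #F)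
    (hmom : ∀ j < 2 * m, Integrable (fun x : ℝ => x ^ j) σ)
    {q : ℝ[X]} (hq : q ≠ 0) (hdeg : q.degree < m) : 0 < ∫ x, (q * q).eval x ∂σ := by
  refine (integral_nonneg fun x => ?_).lt_of_ne fun h => ?_
  · simpa using mul_self_nonneg (q.eval x)
  have hcard := le_card_roots_of_integral_eval_eq_zero hσ (mul_ne_zero hq hq)
    (fun x y => by
      simpa using mul_nonneg (mul_self_nonneg (q.eval x)) (mul_self_nonneg (q.eval y)))
    (integrable_eval_of_degree_lt hmom (two_mul m ▸ degree_mul_lt_of_le_of_lt hdeg.le hdeg))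
    h.symm
  rw [roots_mul (mul_ne_zero hq hq), Multiset.toFinset_add, union_self] at hcard
  have := (Multiset.toFinset_card_le _).trans (card_roots' q)
  have := (natDegree_lt_iff_degree_lt hq).2 hdeg
  omega

theorem le_card_roots_of_orthogonal (hσ : ∀ F : Finset ℝ, σ (↑F)ᶜ = 0 → m ≤ #F)
    (hmom : ∀ j < 2 * m, Integrable (fun x : ℝ => x ^ j) σ) {P : ℝ[X]} (hP : P.degree = m)
    (horth : ∀ q : ℝ[X], q.degree < m → ∫ x, (P * q).eval x ∂σ = 0) :
    m ≤ #P.roots.toFinset := by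
  classical
  by_contra! hlt
  set Fo := {z ∈ P.roots.toFinset | Odd (P.roots.count z)}
  set q : ℝ[X] := ∏ z ∈ Fo, (X - C z)
  have hP0 : P ≠ 0 := by
    rintro rfl
    simp at hP
  have hq0 : q ≠ 0 := (monic_prod_of_monic _ _ fun z _ => monic_X_sub_C z).ne_zero
  have hqdeg : q.degree < m := by
    rw [degree_eq_natDegree hq0, natDegree_finsetProd_X_sub_C_eq_card]
    exact_mod_cast (card_filter_le _ _).trans_lt hlt
  have hPq : P * q ≠ 0 := mul_ne_zero hP0 hq0
  have hroots : (P * q).roots = P.roots + Fo.val := by rw [roots_mul hPq, roots_prod_X_sub_C]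
  have heven : ∀ z, Even ((P * q).roots.count z) := by
    intro z
    rw [hroots, Multiset.count_add, Multiset.count_eq_of_nodup Fo.nodup]
    by_cases hz : Odd (P.roots.count z)
    · have hzFo : z ∈ Fo :=
        mem_filter.2 ⟨Multiset.mem_toFinset.2 (Multiset.count_pos.1 hz.pos), hz⟩
      rw [if_pos (show z ∈ Fo.val from hzFo)]
      exact hz.add_one
    · rw [if_neg (show z ∉ Fo.val from fun h => hz (mem_filter.1 h).2), add_zero]
      exact Nat.not_odd_iff_even.1 hz
  have hcard := le_card_roots_of_integral_eval_eq_zero hσ hPq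
    (eval_mul_eval_nonneg_of_even_count_roots heven)
    (integrable_eval_of_degree_lt hmom (two_mul m ▸ degree_mul_lt_of_le_of_lt hP.le hqdeg))
    (horth q hqdeg)
  rw [hroots, Multiset.toFinset_add, val_toFinset,
    union_eq_left.2 (filter_subset _ _)] at hcard
  omega

theorem exists_gauss_quadrature (hσ : ∀ F : Finset ℝ, σ (↑F)ᶜ = 0 → m ≤ #F)
    (hmom : ∀ j < 2 * m, Integrable (fun x : ℝ => x ^ j) σ) :
    ∃ t w : Fin m → ℝ, StrictMono t ∧ (∀ i, 0 < w i) ∧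
      ∀ f : ℝ[X], f.degree < ↑(2 * m) → ∑ i, w i * f.eval (t i) = ∫ x, f.eval x ∂σ := by
  set L := momentFunctional σ
  have hL : ∀ f : ℝ[X], f.degree < ↑(2 * m) → L f = ∫ x, f.eval x ∂σ :=
    fun f hf => momentFunctional_apply hmom hf
  have hpos : ∀ q : ℝ[X], q.degree < m → q ≠ 0 → 0 < L (q * q) := fun q hq hq0 => by
    rw [hL _ (two_mul m ▸ degree_mul_lt_of_le_of_lt hq.le hq)]
    exact integral_eval_mul_self_pos hσ hmom hq0 hq
  obtain ⟨P, hPm, hPdeg, horth⟩ :=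
    exists_monic_orthogonal fun q hq hq0 => (hpos q hq hq0).ne'
  set s := P.roots.toFinset
  have hs : #s = m := by
    refine le_antisymm ?_ (le_card_roots_of_orthogonal hσ hmom hPdeg fun q hq => ?_)
    · exact (Multiset.toFinset_card_le _).trans
        ((card_roots' P).trans (natDegree_eq_of_degree_eq_some hPdeg).le)
    · rw [← hL _ (two_mul m ▸ degree_mul_lt_of_le_of_lt hPdeg.le hq), horth q hq]
  subst hs
  have hexact : ∀ f : ℝ[X], f.degree < ↑(2 * #s) →
      L f = ∑ z ∈ s, L (Lagrange.basis s id z) * f.eval z := fun f hf =>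
    apply_eq_sum_basis_mul_eval hPm hPdeg
      (fun z hz => isRoot_of_mem_roots (Multiset.mem_toFinset.1 hz)) horth hf
  set e := s.orderEmbOfFin rfl
  refine ⟨e, fun i => L (Lagrange.basis s id (e i)), e.strictMono,
    fun i => apply_basis_pos hpos hexact (s.orderEmbOfFin_mem rfl i), fun f hf => ?_⟩
  have hsum := sum_map univ e.toEmbedding fun z => L (Lagrange.basis s id z) * f.eval z
  rw [s.map_orderEmbOfFin_univ rfl] at hsum
  rw [← hL f hf, hexact f hf, hsum]
  rfl

end Moments

theorem sum_nodalWeight_mul_eval_eq_zero {K ι : Type*} [Field K] [DecidableEq ι]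
    {s : Finset ι} {v : ι → K} (hvs : Set.InjOn v s) {f : K[X]} (hf : f.degree < ↑(#s - 1)) :
    ∑ i ∈ s, nodalWeight s v i * f.eval (v i) = 0 := by
  rw [← coeff_eq_zero_of_degree_lt hf,
    coeff_eq_sum hvs (hf.trans_le (WithBot.coe_le_coe.2 (Nat.sub_le _ _)))]
  refine sum_congr rfl fun i _ => ?_
  rw [nodalWeight, prod_inv_distrib, div_eq_inv_mul]

theorem neg_one_pow_mul_nodalWeight_pos {n : ℕ} {z : Fin (n + 1) → ℝ} (hz : StrictMono z)
    (i : Fin (n + 1)) : 0 < (-1) ^ (n - i : ℕ) * nodalWeight univ z i := by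
  have hsplit : univ.erase i = Iio i ∪ Ioi i := by
    ext j
    simp only [mem_erase, mem_univ, and_true, mem_union, mem_Iio, mem_Ioi]
    exact ne_iff_lt_or_gt
  have hdisj : Disjoint (Iio i) (Ioi i) :=
    disjoint_left.2 fun j h1 h2 => lt_asymm (mem_Iio.1 h1) (mem_Ioi.1 h2)
  have hsign : (-1 : ℝ) ^ (n - i : ℕ) = ∏ _j ∈ Ioi i, (-1) := by
    rw [prod_const, Fin.card_Ioi, Nat.add_sub_cancel]
  rw [nodalWeight, hsplit, prod_union hdisj, hsign, mul_left_comm, ← prod_mul_distrib]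
  refine mul_pos (prod_pos fun j hj => ?_) (prod_pos fun j hj => ?_)
  · exact inv_pos.2 (sub_pos.2 (hz (mem_Iio.1 hj)))
  · rw [neg_one_mul, neg_pos, inv_lt_zero, sub_neg]
    exact hz (mem_Ioi.1 hj)

theorem exists_pos_forall_add_mul_pos {ι : Type*} [Finite ι] {a b : ι → ℝ}
    (h : ∀ i, 0 < a i ∨ 0 ≤ a i ∧ 0 < b i) : ∃ ε > 0, ∀ i, 0 < a i + ε * b i := by
  have hev : ∀ i, ∀ᶠ ε in 𝓝[>] (0 : ℝ), 0 < a i + ε * b i := by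
    intro i
    rcases h i with ha | ⟨ha, hb⟩
    · have hlim : Tendsto (fun ε => a i + ε * b i) (𝓝 0) (𝓝 (a i)) :=
        (continuous_const.add (continuous_id.mul continuous_const)).tendsto' 0 (a i) (by simp)
      exact nhdsWithin_le_nhds (hlim.eventually (lt_mem_nhds ha))
    · filter_upwards [self_mem_nhdsWithin] with ε (hε : 0 < ε)
      exact add_pos_of_nonneg_of_pos ha (mul_pos hε hb)
  obtain ⟨ε, hpos, hε⟩ := ((eventually_all.2 hev).and self_mem_nhdsWithin).exists
  exact ⟨ε, hε, hpos⟩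

def oddIndex {m : ℕ} (i : Fin m) : Fin (2 * m + 1) := ⟨2 * i + 1, by omega⟩

theorem oddIndex_injective {m : ℕ} : Function.Injective (oddIndex (m := m)) := fun i j h => by
  simpa [oddIndex, Fin.ext_iff] using h

theorem exists_strictMono_interlacing {m : ℕ} {t : Fin m → ℝ} (ht : StrictMono t) :
    ∃ z : Fin (2 * m + 1) → ℝ, StrictMono z ∧ ∀ i, z (oddIndex i) = t i := by
  set S := 1 + ∑ j, |t j|
  have hS : ∀ j, |t j| < S := fun j => by
    have := single_le_sum (fun j _ => abs_nonneg (t j)) (mem_univ j)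
    linarith
  have hS0 : 0 < S := by positivity
  -- `U` lists `-S, t 0, …, t (m - 1), S`; the entries of `z` at even positions are midpoints of
  -- consecutive values of `U`.
  set U : ℕ → ℝ := fun n =>
    if h₀ : n = 0 then -S else if h : n ≤ m then t ⟨n - 1, by omega⟩ else S
  have hU : ∀ n ≤ m, U n < U (n + 1) := by
    intro n hn
    rcases Nat.eq_zero_or_pos n with rfl | hn0
    · simp only [U, zero_add, one_ne_zero, dite_true, dite_false]
      split_ifs
      · exact neg_lt_of_abs_lt (hS _)
      · linarith
    · rcases hn.lt_or_eq with hlt | rfl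
      · simp only [U, hn0.ne', hn, hlt, Nat.succ_ne_zero, dif_pos, Nat.succ_le_of_lt]
        exact ht (Fin.mk_lt_mk.2 (by omega))
      · simpa [U, hn0.ne'] using lt_of_abs_lt (hS _)
  refine ⟨fun k => (U ((k + 1) / 2) + U (k / 2 + 1)) / 2,
    Fin.strictMono_iff_lt_succ.2 fun k => ?_, fun i => ?_⟩
  · have h1 : ((k : ℕ) + 1 + 1) / 2 = (k : ℕ) / 2 + 1 := by omega
    have := hU (((k : ℕ) + 1) / 2) (by omega)
    simp only [Fin.val_succ, Fin.val_castSucc, h1]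
    linarith
  · have h1 : (2 * (i : ℕ) + 1 + 1) / 2 = i + 1 := by omega
    have h2 : (2 * (i : ℕ) + 1) / 2 + 1 = i + 1 := by omega
    simp [oddIndex, h1, h2, U, i.is_lt]

theorem exists_interlaced_quadrature {m : ℕ} {t w : Fin m → ℝ} (ht : StrictMono t)
    (hw : ∀ i, 0 < w i) :
    ∃ z lam : Fin (2 * m + 1) → ℝ, StrictMono z ∧ (∀ k, 0 < lam k) ∧
      ∀ f : ℝ[X], f.degree < ↑(2 * m) →
        ∑ k, lam k * f.eval (z k) = ∑ i, w i * f.eval (t i) := by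
  obtain ⟨z, hz, hzt⟩ := exists_strictMono_interlacing ht
  set W := Function.extend oddIndex w 0
  set v := nodalWeight univ z
  have hWv : ∀ k, 0 < W k ∨ 0 ≤ W k ∧ 0 < v k := by
    intro k
    by_cases hk : ∃ i, oddIndex i = k
    · obtain ⟨i, rfl⟩ := hk
      left
      simpa [W, oddIndex_injective.extend_apply] using hw i
    · refine Or.inr ⟨by simp [W, Function.extend_apply' _ _ _ hk], ?_⟩
      have hkeven : (k : ℕ) % 2 = 0 := by
        by_contra hodd
        exact hk ⟨⟨k / 2, by omega⟩, Fin.ext (by simp [oddIndex]; omega)⟩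
      have heven : Even (2 * m - k : ℕ) := Nat.even_iff.2 (by omega)
      simpa [heven.neg_one_pow] using neg_one_pow_mul_nodalWeight_pos hz k
  obtain ⟨ε, hε, hpos⟩ := exists_pos_forall_add_mul_pos hWv
  refine ⟨z, fun k => W k + ε * v k, hz, hpos, fun f hf => ?_⟩
  have hv : ∑ k, v k * f.eval (z k) = 0 :=
    sum_nodalWeight_mul_eval_eq_zero hz.injective.injOn (by simpa using hf)
  have hW : ∑ k, W k * f.eval (z k) = ∑ i, w i * f.eval (t i) :=
    (Fintype.sum_of_injective oddIndex oddIndex_injective _ _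
      (fun k hk => by simp [W, Function.extend_apply' _ _ _ hk])
      (fun i => by simp [W, oddIndex_injective.extend_apply, hzt])).symm
  simp only [add_mul, sum_add_distrib, mul_assoc, ← mul_sum, hv, mul_zero, add_zero, hW]

end Quadrature

open Quadrature

/-- If a probability measure `σ` with finite `(2m−1)`-st absolute moment is not purely atomic
with fewer than `m` atoms, then there is a quadrature formula for `σ` of degree at least
`2m−1` with exactly `2m+1` distinct nodes. -/
theorem quadrature_with_2m_plus_one_nodes
    (m : ℕ) (hm : 1 ≤ m) (σ : Measure ℝ) [IsProbabilityMeasure σ]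
    (hint : Integrable (fun x => |x| ^ (2 * m - 1)) σ)
    (h : ¬ ∃ m' : ℕ, m' < m ∧ ∃ (a : Fin m' → ℝ) (w : Fin m' → ℝ≥0∞),
      Function.Injective a ∧ (∀ i, w i ≠ 0) ∧ σ = ∑ i, w i • Measure.dirac (a i)) :
    ∃ (x : Fin (2 * m + 1) → ℝ) (lam : Fin (2 * m + 1) → ℝ),
      Function.Injective x ∧ (∀ i, 0 < lam i) ∧ ∑ i, lam i = 1 ∧
      ∀ j : ℕ, j ≤ 2 * m - 1 → ∑ i, lam i * x i ^ j = ∫ t, t ^ j ∂σ := by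
  have hmom : ∀ j < 2 * m, Integrable (fun x : ℝ => x ^ j) σ :=
    fun j hj => integrable_pow_of_le hint (by omega)
  have hσ : ∀ F : Finset ℝ, σ (↑F)ᶜ = 0 → m ≤ #F := fun F hF => by
    by_contra! hlt
    obtain ⟨n, hn, a, w, ha, hw, hσa⟩ := exists_eq_sum_smul_dirac σ hF
    exact h ⟨n, by omega, a, w, ha, hw, hσa⟩
  obtain ⟨t, w, ht, hw, hgauss⟩ := exists_gauss_quadrature hσ hmom
  obtain ⟨x, lam, hx, hlam, hpad⟩ := exists_interlaced_quadrature ht hw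
  have hexact : ∀ f : ℝ[X], f.degree < ↑(2 * m) →
      ∑ i, lam i * f.eval (x i) = ∫ t, f.eval t ∂σ := fun f hf => (hpad f hf).trans (hgauss f hf)
  refine ⟨x, lam, hx.injective, hlam, ?_, fun j hj => ?_⟩
  · simpa using hexact 1 (by rw [degree_one]; exact_mod_cast (by omega : 0 < 2 * m))
  · simpa using hexact (X ^ j) (by rw [degree_X_pow]; exact_mod_cast (by omega : j < 2 * m))
end

section
/- Let σ be a probability measure on ℝ with σ([0,1]) = 1 and let n ∈ ℕ. For 1 ≤ i ≤ n define y_i := min{ y ∈ [0,1] : σ([0,y]) ≥ i/n } (this minimum exists). Then for every integer j ≥ 1, | ∫ x^j dσ(x) − (1/n)·∑_{i=1}^n y_i^j | ≤ 1/n. -/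
/-!
Both `σ` and the uniform measure `τ` on the points `y i` live on `[0, 1]`, so by the layer-cake
formula their `j`-th moments are `∫₀¹ σ {x | t < x ^ j} dt` and `∫₀¹ τ {x | t < x ^ j} dt`, where
`{x ∈ [0, 1] | t < x ^ j} = (t ^ (1 / j), 1]`. It therefore suffices that the tails `σ (s, ∞)` and
`τ (s, ∞)` differ by at most `1 / n` for every `s ∈ [0, 1]`. By minimality of the `y i`,
`y i ≤ s` exactly when `(i + 1) / n ≤ σ [0, s]`, so `τ [0, s] = ⌊n σ [0, s]⌋ / n`, which lies
within `1 / n` of `σ [0, s]`.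
-/

open MeasureTheory Set
open scoped Finset ENNReal

section LayerCake

variable {α : Type*} [MeasurableSpace α]

theorem ae_mem_of_measure_eq_one {μ : Measure α} [IsProbabilityMeasure μ] {s : Set α}
    (hs : MeasurableSet s) (h : μ s = 1) : ∀ᵐ x ∂μ, x ∈ s :=
  mem_ae_iff.mpr ((prob_compl_eq_zero_iff hs).mpr h)

theorem integrableOn_measureReal_setOf_le (μ : Measure α) [IsFiniteMeasure μ] (f : α → ℝ)
    (a b : ℝ) : IntegrableOn (fun t => μ.real {x | t ≤ f x}) (Icc a b) := by
  have hanti : Antitone fun t => μ.real {x | t ≤ f x} :=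
    fun _ _ hst => measureReal_mono fun _ hx => hst.trans hx
  exact hanti.locallyIntegrable.integrableOn_isCompact isCompact_Icc

theorem abs_integral_sub_le_of_abs_measureReal_setOf_lt_sub_le {μ ν : Measure α}
    [IsFiniteMeasure μ] [IsFiniteMeasure ν] {f : α → ℝ} {M ε : ℝ} (hfμ : Integrable f μ)
    (hfν : Integrable f ν) (h0μ : 0 ≤ᵐ[μ] f) (h0ν : 0 ≤ᵐ[ν] f) (hMμ : f ≤ᵐ[μ] fun _ => M)
    (hMν : f ≤ᵐ[ν] fun _ => M) (hM : 0 ≤ M)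
    (h : ∀ t ∈ Ioc 0 M, |μ.real {x | t < f x} - ν.real {x | t < f x}| ≤ ε) :
    |∫ x, f x ∂μ - ∫ x, f x ∂ν| ≤ ε * M := by
  rw [hfμ.integral_eq_integral_Ioc_meas_le h0μ hMμ, hfν.integral_eq_integral_Ioc_meas_le h0ν hMν,
    ← integral_sub ((integrableOn_measureReal_setOf_le μ f 0 M).mono_set Ioc_subset_Icc_self)
      ((integrableOn_measureReal_setOf_le ν f 0 M).mono_set Ioc_subset_Icc_self)]
  have hε : ∀ᵐ t ∂volume.restrict (Ioc 0 M),
      ‖μ.real {x | t ≤ f x} - ν.real {x | t ≤ f x}‖ ≤ ε := by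
    filter_upwards [meas_le_ae_eq_meas_lt μ _ f, meas_le_ae_eq_meas_lt ν _ f,
      ae_restrict_mem measurableSet_Ioc] with t hμt hνt ht
    simpa only [Real.norm_eq_abs, measureReal_def, hμt, hνt] using h t ht
  simpa [Real.volume_real_Ioc_of_le hM] using
    norm_setIntegral_le_of_norm_le_const_ae measure_Ioc_lt_top hε

end LayerCake

section UnitInterval

variable {μ ν : Measure ℝ} {ε : ℝ}

theorem measureReal_Ioi_add_measureReal_Icc [IsProbabilityMeasure μ]
    (hμ : ∀ᵐ x ∂μ, 0 ≤ x) {s : ℝ} (hs : 0 ≤ s) : μ.real (Ioi s) + μ.real (Icc 0 s) = 1 := by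
  rw [add_comm, ← measureReal_union ((Iic_disjoint_Ioi le_rfl).mono_left Icc_subset_Iic_self)
    measurableSet_Ioi, Icc_union_Ioi_eq_Ici hs, measureReal_def,
    (prob_compl_eq_zero_iff measurableSet_Ici).mp (mem_ae_iff.mp hμ), ENNReal.toReal_one]

theorem measureReal_setOf_pow_lt_pow (h0 : ∀ᵐ x ∂μ, 0 ≤ x) {s : ℝ} (hs : 0 ≤ s) {j : ℕ}
    (hj : j ≠ 0) : μ.real {x | s ^ j < x ^ j} = μ.real (Ioi s) := by
  refine measureReal_congr ?_
  filter_upwards [h0] with x hx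
  exact propext (pow_lt_pow_iff_left₀ hs hx hj)

theorem ae_pow_mem_Icc (hμ : ∀ᵐ x ∂μ, x ∈ Icc (0 : ℝ) 1) (j : ℕ) :
    ∀ᵐ x ∂μ, x ^ j ∈ Icc (0 : ℝ) 1 := by
  filter_upwards [hμ] with x hx using ⟨pow_nonneg hx.1 j, pow_le_one₀ hx.1 hx.2⟩

theorem abs_integral_pow_sub_le_of_abs_measureReal_Ioi_sub_le [IsFiniteMeasure μ]
    [IsFiniteMeasure ν] (hμ : ∀ᵐ x ∂μ, x ∈ Icc (0 : ℝ) 1) (hν : ∀ᵐ x ∂ν, x ∈ Icc (0 : ℝ) 1)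
    {j : ℕ} (hj : j ≠ 0) (h : ∀ s ∈ Icc (0 : ℝ) 1, |μ.real (Ioi s) - ν.real (Ioi s)| ≤ ε) :
    |∫ x, x ^ j ∂μ - ∫ x, x ^ j ∂ν| ≤ ε := by
  have hμj := ae_pow_mem_Icc hμ j
  have hνj := ae_pow_mem_Icc hν j
  have hmeas : Measurable fun x : ℝ => x ^ j := measurable_id.pow_const j
  refine (mul_one ε).le.trans' <| abs_integral_sub_le_of_abs_measureReal_setOf_lt_sub_le
    (.of_mem_Icc 0 1 hmeas.aemeasurable hμj) (.of_mem_Icc 0 1 hmeas.aemeasurable hνj)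
    (hμj.mono fun _ hx => hx.1) (hνj.mono fun _ hx => hx.1)
    (hμj.mono fun _ hx => hx.2) (hνj.mono fun _ hx => hx.2) zero_le_one fun t ht => ?_
  set s := t ^ (j⁻¹ : ℝ)
  have hs : s ∈ Icc (0 : ℝ) 1 :=
    ⟨Real.rpow_nonneg ht.1.le _, Real.rpow_le_one ht.1.le ht.2 (by positivity)⟩
  rw [← Real.rpow_inv_natCast_pow ht.1.le hj,
    measureReal_setOf_pow_lt_pow (hμ.mono fun _ hx => hx.1) hs.1 hj,
    measureReal_setOf_pow_lt_pow (hν.mono fun _ hx => hx.1) hs.1 hj]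
  exact h s hs

end UnitInterval

noncomputable def empiricalMeasure {α : Type*} [MeasurableSpace α] {n : ℕ} (y : Fin n → α) :
    Measure α :=
  (n : ℝ≥0∞)⁻¹ • ∑ i, Measure.dirac (y i)

section empiricalMeasure

variable {α : Type*} [MeasurableSpace α] {n : ℕ} (y : Fin n → α)

theorem empiricalMeasure_apply {s : Set α} [DecidablePred (· ∈ s)] (hs : MeasurableSet s) :
    empiricalMeasure y s = (n : ℝ≥0∞)⁻¹ * #{i | y i ∈ s} := by
  simp [empiricalMeasure, Measure.dirac_apply' _ hs, Set.indicator_apply, Finset.sum_boole]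

theorem empiricalMeasure_eq_one {s : Set α} (hn : n ≠ 0) (hs : MeasurableSet s)
    (hy : ∀ i, y i ∈ s) : empiricalMeasure y s = 1 := by
  classical
  rw [empiricalMeasure_apply y hs, Finset.filter_true_of_mem fun i _ => hy i, Finset.card_univ,
    Fintype.card_fin, ENNReal.inv_mul_cancel (by exact_mod_cast hn) (ENNReal.natCast_ne_top n)]

theorem isProbabilityMeasure_empiricalMeasure (hn : n ≠ 0) :
    IsProbabilityMeasure (empiricalMeasure y) :=
  ⟨empiricalMeasure_eq_one y hn MeasurableSet.univ fun _ => mem_univ _⟩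

theorem integral_empiricalMeasure [MeasurableSingletonClass α] (f : α → ℝ) :
    ∫ x, f x ∂empiricalMeasure y = (n : ℝ)⁻¹ * ∑ i, f (y i) := by
  rw [empiricalMeasure, integral_smul_measure,
    integral_finsetSum_measure fun i _ => integrable_dirac enorm_lt_top]
  simp [integral_dirac]

end empiricalMeasure

theorem quantile_le_iff {σ : Measure ℝ} {c : ℝ≥0∞} {q s : ℝ}
    (hq : IsLeast {t | t ∈ Icc 0 1 ∧ c ≤ σ (Icc 0 t)} q) (hs : s ∈ Icc (0 : ℝ) 1) :
    q ≤ s ↔ c ≤ σ (Icc 0 s) :=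
  ⟨fun h => hq.1.2.trans (measure_mono (Icc_subset_Icc_right h)), fun h => hq.2 ⟨hs, h⟩⟩

theorem abs_sub_floor_mul_div_le {x : ℝ} (hx : 0 ≤ x) {n : ℕ} (hn : 0 < n) :
    |x - ⌊n * x⌋₊ / n| ≤ 1 / n := by
  have hn' : (0 : ℝ) < n := Nat.cast_pos.mpr hn
  have h₁ := Nat.floor_le (mul_nonneg hn'.le hx)
  have h₂ := Nat.lt_floor_add_one ((n : ℝ) * x)
  rw [show x - ⌊n * x⌋₊ / n = (n * x - ⌊n * x⌋₊) / n by field_simp, abs_div, abs_of_pos hn']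
  exact div_le_div_of_nonneg_right (abs_sub_le_iff.mpr ⟨by linarith, by linarith⟩) hn'.le

theorem card_quantile_mem_Icc {σ : Measure ℝ} [IsProbabilityMeasure σ] {n : ℕ} {y : Fin n → ℝ}
    (hy : ∀ i : Fin n, IsLeast {t : ℝ | t ∈ Icc (0 : ℝ) 1 ∧
      ENNReal.ofReal (((i : ℕ) + 1 : ℝ) / n) ≤ σ (Icc 0 t)} (y i))
    (hn : 0 < n) {s : ℝ} (hs : s ∈ Icc (0 : ℝ) 1) :
    #{i | y i ∈ Icc 0 s} = ⌊n * σ.real (Icc 0 s)⌋₊ := by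
  have hn' : (0 : ℝ) < n := Nat.cast_pos.mpr hn
  have hmem : ∀ i : Fin n, y i ∈ Icc 0 s ↔ (i : ℕ) < ⌊n * σ.real (Icc 0 s)⌋₊ := fun i => by
    rw [Nat.lt_iff_add_one_le, Nat.le_floor_iff (by positivity), mem_Icc,
      and_iff_right (hy i).1.1.1, quantile_le_iff (hy i) hs,
      ENNReal.ofReal_le_iff_le_toReal (measure_ne_top σ _), div_le_iff₀' hn']
    push_cast
    rfl
  rw [Finset.filter_congr fun i _ => hmem i, Fin.card_filter_val_lt, min_eq_right]
  exact Nat.floor_le_of_le (mul_le_of_le_one_right hn'.le measureReal_le_one)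

theorem abs_measureReal_Ioi_sub_empiricalMeasure_le {σ : Measure ℝ} [IsProbabilityMeasure σ]
    (hσ : ∀ᵐ x ∂σ, x ∈ Icc (0 : ℝ) 1) {n : ℕ} (hn : 0 < n) {y : Fin n → ℝ}
    (hy : ∀ i : Fin n, IsLeast {t : ℝ | t ∈ Icc (0 : ℝ) 1 ∧
      ENNReal.ofReal (((i : ℕ) + 1 : ℝ) / n) ≤ σ (Icc 0 t)} (y i))
    {s : ℝ} (hs : s ∈ Icc (0 : ℝ) 1) :
    |σ.real (Ioi s) - (empiricalMeasure y).real (Ioi s)| ≤ 1 / n := by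
  have := isProbabilityMeasure_empiricalMeasure y hn.ne'
  have hτ : ∀ᵐ x ∂empiricalMeasure y, x ∈ Ici 0 := ae_mem_of_measure_eq_one measurableSet_Ici
    (empiricalMeasure_eq_one y hn.ne' measurableSet_Ici fun i => (hy i).1.1.1)
  have hσs := measureReal_Ioi_add_measureReal_Icc (hσ.mono fun _ hx => hx.1) hs.1
  have hτs := measureReal_Ioi_add_measureReal_Icc hτ hs.1
  have hτF : (empiricalMeasure y).real (Icc 0 s) = ⌊n * σ.real (Icc 0 s)⌋₊ / n := by
    rw [measureReal_def, empiricalMeasure_apply y measurableSet_Icc, card_quantile_mem_Icc hy hn hs]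
    simp [div_eq_inv_mul]
  rw [show σ.real (Ioi s) - (empiricalMeasure y).real (Ioi s)
      = (empiricalMeasure y).real (Icc 0 s) - σ.real (Icc 0 s) by linarith, hτF, abs_sub_comm]
  exact abs_sub_floor_mul_div_le measureReal_nonneg hn

/-- Simple approximation lemma: if `σ` is a probability measure on `[0,1]` and
`y_i := min{ y ∈ [0,1] : σ([0,y]) ≥ i/n }` for `1 ≤ i ≤ n`, then for every `j ≥ 1` the `j`-th
moment of the uniform measure on the `y_i` differs from that of `σ` by at most `1/n`. -/
theorem simple_approximation
    (σ : Measure ℝ) [IsProbabilityMeasure σ] (hσ : σ (Set.Icc (0 : ℝ) 1) = 1)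
    (n : ℕ) (hn : 0 < n) (y : Fin n → ℝ)
    (hy : ∀ i : Fin n, IsLeast {t : ℝ | t ∈ Set.Icc (0 : ℝ) 1 ∧
      ENNReal.ofReal (((i : ℕ) + 1 : ℝ) / n) ≤ σ (Set.Icc 0 t)} (y i))
    (j : ℕ) (hj : 1 ≤ j) :
    |(∫ t, t ^ j ∂σ) - (n : ℝ)⁻¹ * ∑ i, y i ^ j| ≤ 1 / n := by
  have := isProbabilityMeasure_empiricalMeasure y hn.ne'
  have hσI := ae_mem_of_measure_eq_one measurableSet_Icc hσ
  have hτI : ∀ᵐ x ∂empiricalMeasure y, x ∈ Icc (0 : ℝ) 1 := ae_mem_of_measure_eq_one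
    measurableSet_Icc (empiricalMeasure_eq_one y hn.ne' measurableSet_Icc fun i => (hy i).1.1)
  rw [← integral_empiricalMeasure y fun x => x ^ j]
  exact abs_integral_pow_sub_le_of_abs_measureReal_Ioi_sub_le hσI hτI (by omega)
    fun s hs => abs_measureReal_Ioi_sub_empiricalMeasure_le hσI hn hy hs
end

section
/- Let σ be a probability measure on ℝ with σ([0,1]) = 1, let n ∈ ℕ, and for 1 ≤ i ≤ n let y_i := min{ y ∈ [0,1] : σ([0,y]) ≥ i/n }. Let k ≥ 2 be an integer with n ≥ k(k+3) and set ρ := (k−1)·R_σ(1/(k+3)). Then there exist s := ⌈n/(k+3)⌉ pairwise disjoint index sets I₁,…,I_s ⊆ {1,…,n}, each of size exactly k, such that for every 1 ≤ r ≤ s and all i, j ∈ I_r with i ≠ j: ρ/(3(k−1)) ≤ y_i ≤ 1 − ρ/(3(k−1)) and |y_i − y_j| ≥ ρ/(k−1). -/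
/-!
Put `s = ⌈n/(k+3)⌉` and split the ranks `s-1, …, (k+1)s-2` into the `s` residue classes mod `s`;
each class is an arithmetic progression of `k` ranks with step `s ≥ n/(k+3)`.
By minimality of the quantile `y_i` and continuity from below, `σ([0, y_i)) ≤ (i+1)/n`, so
between the quantiles of two ranks at distance `≥ s` there is an interval of mass
`≥ 1/(k+3)`, whose length is therefore at least `R_σ(1/(k+3)) = ρ/(k-1)`.
The same argument against the endpoints `0` and `1` (the last rank stays far enough below `n`
because `n ≥ k(k+3)`) gives `y_i ≥ R_σ(1/(k+3))` and `1 - y_i ≥ R_σ(1/(k+3))`.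
-/

open MeasureTheory

/-- `Rsig σ δ` is the inverse modulus of continuity of the measure `σ`: the infimum of
lengths of closed intervals of `σ`-measure at least `δ`. -/
noncomputable def Rsig (σ : Measure ℝ) (δ : ℝ) : ℝ :=
  sInf {r : ℝ | ∃ x y : ℝ, x ≤ y ∧ ENNReal.ofReal δ ≤ σ (Set.Icc x y) ∧ r = y - x}

open Set ENNReal Function

section Rsig

variable {σ : Measure ℝ} {δ : ℝ}

lemma Rsig_nonneg : 0 ≤ Rsig σ δ :=
  Real.sInf_nonneg <| by rintro _ ⟨x, y, hxy, -, rfl⟩; exact sub_nonneg.2 hxy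

lemma Rsig_le_sub {x y : ℝ} (hxy : x ≤ y) (h : ENNReal.ofReal δ ≤ σ (Icc x y)) :
    Rsig σ δ ≤ y - x :=
  csInf_le ⟨0, by rintro _ ⟨a, b, hab, -, rfl⟩; exact sub_nonneg.2 hab⟩ ⟨x, y, hxy, h, rfl⟩

end Rsig

lemma measure_Ico_le_of_forall_lt {μ : Measure ℝ} {a b : ℝ} {c : ℝ≥0∞}
    (h : ∀ t < b, μ (Icc a t) ≤ c) : μ (Ico a b) ≤ c := by
  have hmono : Monotone fun m : ℕ => Icc a (b - 1 / (m + 1)) := fun m m' hm =>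
    Icc_subset_Icc_right (by gcongr)
  have hIco : Ico a b = ⋃ m : ℕ, Icc a (b - 1 / (m + 1)) := by
    ext t
    simp only [mem_Ico, mem_iUnion, mem_Icc]
    refine ⟨fun ⟨hat, htb⟩ => ?_, fun ⟨m, hat, htm⟩ => ⟨hat, htm.trans_lt (by simp; positivity)⟩⟩
    obtain ⟨m, hm⟩ := exists_nat_one_div_lt (sub_pos.2 htb)
    exact ⟨m, hat, by linarith⟩
  rw [hIco, hmono.measure_iUnion]
  exact iSup_le fun m => h _ (by simp; positivity)

section Quantile

variable {σ : Measure ℝ} {p x : ℝ}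

lemma isLeast_zero_of_nonpos (hp : p ≤ 0) :
    IsLeast {t | t ∈ Icc 0 1 ∧ ENNReal.ofReal p ≤ σ (Icc 0 t)} 0 :=
  ⟨⟨left_mem_Icc.2 zero_le_one, by simp [ENNReal.ofReal_of_nonpos hp]⟩, fun _ ht => ht.1.1⟩

lemma measure_Ico_le_of_isLeast
    (hx : IsLeast {t | t ∈ Icc 0 1 ∧ ENNReal.ofReal p ≤ σ (Icc 0 t)} x) :
    σ (Ico 0 x) ≤ ENNReal.ofReal p := by
  refine measure_Ico_le_of_forall_lt fun t htx => ?_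
  rcases lt_or_ge t 0 with ht | ht
  · simp [Icc_eq_empty_of_lt ht]
  · by_contra! hlt
    exact htx.not_ge (hx.2 ⟨⟨ht, htx.le.trans hx.1.1.2⟩, hlt.le⟩)

lemma measure_Icc_le_add_of_isLeast
    (hx : IsLeast {t | t ∈ Icc 0 1 ∧ ENNReal.ofReal p ≤ σ (Icc 0 t)} x) (b : ℝ) :
    σ (Icc 0 b) ≤ ENNReal.ofReal p + σ (Icc x b) :=
  calc σ (Icc 0 b) ≤ σ (Ico 0 x ∪ Icc x b) := measure_mono Icc_subset_Ico_union_Icc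
    _ ≤ σ (Ico 0 x) + σ (Icc x b) := measure_union_le _ _
    _ ≤ ENNReal.ofReal p + σ (Icc x b) := by gcongr; exact measure_Ico_le_of_isLeast hx

lemma Rsig_le_sub_of_isLeast {δ q b : ℝ}
    (hx : IsLeast {t | t ∈ Icc 0 1 ∧ ENNReal.ofReal p ≤ σ (Icc 0 t)} x) (hb : b ∈ Icc 0 1)
    (hbq : ENNReal.ofReal q ≤ σ (Icc 0 b)) (hp : 0 ≤ p) (hδ : 0 ≤ δ) (hpq : p + δ ≤ q) :
    Rsig σ δ ≤ b - x := by
  have h : ENNReal.ofReal p + ENNReal.ofReal δ ≤ σ (Icc 0 b) := by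
    rw [← ENNReal.ofReal_add hp hδ]; exact (ENNReal.ofReal_le_ofReal hpq).trans hbq
  refine Rsig_le_sub (hx.2 ⟨hb, le_self_add.trans h⟩) ?_
  exact ENNReal.le_of_add_le_add_left ofReal_ne_top (h.trans (measure_Icc_le_add_of_isLeast hx b))

lemma Rsig_one_div_le_sub_of_isLeast {a b : ℕ} {n K z : ℝ} (hn : 0 < n) (hK : 0 < K)
    (hx : IsLeast {t | t ∈ Icc 0 1 ∧ ENNReal.ofReal (a / n) ≤ σ (Icc 0 t)} x) (hz : z ∈ Icc 0 1)
    (hzb : ENNReal.ofReal (b / n) ≤ σ (Icc 0 z)) (hab : K * a + n ≤ K * b) :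
    Rsig σ (1 / K) ≤ z - x := by
  refine Rsig_le_sub_of_isLeast hx hz hzb (by positivity) (by positivity) ?_
  rw [div_add_div _ _ hn.ne' hK.ne', div_le_div_iff₀ (by positivity) hn]
  nlinarith

end Quantile

lemma exists_progression_blocks {a s k n : ℕ} (h : a + k * s ≤ n) :
    ∃ I : Fin s → Finset (Fin n), Pairwise (Disjoint on I) ∧ (∀ r, (I r).card = k) ∧
      ∀ r, ∀ i ∈ I r, a ≤ (i : ℕ) ∧ (i : ℕ) < a + k * s ∧
        ∀ j ∈ I r, (i : ℕ) < j → (i : ℕ) + s ≤ j := by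
  let g : Fin k × Fin s → Fin n := fun x =>
    ⟨a + finProdFinEquiv x, by have := (finProdFinEquiv x).isLt; omega⟩
  have hg : Injective g := fun x x' hxx' =>
    finProdFinEquiv.injective (Fin.ext (by simpa [g] using congrArg Fin.val hxx'))
  refine ⟨fun r => Finset.univ.image fun t => g (t, r), ?_, fun r => ?_, ?_⟩
  · intro r r' hrr'
    simp only [onFun, Finset.disjoint_left, Finset.mem_image, Finset.mem_univ, true_and]
    rintro _ ⟨t, rfl⟩ ⟨t', h⟩
    exact hrr' (congrArg Prod.snd (hg h)).symm
  · exact (Finset.card_image_of_injective _ (hg.comp (Prod.mk_left_injective r))).trans (by simp)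
  · simp only [Finset.mem_image, Finset.mem_univ, true_and, forall_exists_index]
    rintro r _ t rfl
    refine ⟨Nat.le_add_right _ _, Nat.add_lt_add_left (finProdFinEquiv (t, r)).isLt a, ?_⟩
    rintro _ t' rfl htt'
    simp only [g, finProdFinEquiv_apply_val] at htt' ⊢
    have htt : (t : ℕ) < t' := Nat.lt_of_mul_lt_mul_left (a := s) (by omega)
    have := Nat.mul_le_mul_left s (Nat.succ_le_of_lt htt)
    rw [Nat.mul_succ] at this
    omega

lemma exists_spread_blocks {n k s : ℕ} (hn : k * (k + 3) ≤ n) (hns : n ≤ (k + 3) * s)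
    (hsn : (k + 3) * s < n + (k + 3)) :
    ∃ I : Fin s → Finset (Fin n), Pairwise (Disjoint on I) ∧ (∀ r, (I r).card = k) ∧
      ∀ r, ∀ i ∈ I r, n ≤ (k + 3) * (i + 1) ∧ (k + 3) * (i + 1) + n ≤ (k + 3) * n ∧
        ∀ j ∈ I r, (i : ℕ) < j → (k + 3) * (i + 1) + n ≤ (k + 3) * (j + 1) := by
  have hks : (k + 1) * s ≤ n + 1 := by
    by_contra! h
    nlinarith [Nat.mul_lt_mul_of_pos_left hsn (show 0 < k + 1 by omega),
      Nat.mul_lt_mul_of_pos_left h (show 0 < k + 3 by omega)]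
  obtain ⟨I, hdisj, hcard, hI⟩ := exists_progression_blocks (a := s - 1) (k := k) (s := s) (n := n)
    (by rcases s.eq_zero_or_pos with hs0 | hs0
        · simp [hs0]
        · rw [add_one_mul] at hks; omega)
  refine ⟨I, hdisj, hcard, fun r i hi => ?_⟩
  obtain ⟨his, hin, hsep⟩ := hI r i hi
  have hs : s ≤ i + 1 := by omega
  have hi2 : i + 2 ≤ (k + 1) * s := by have := r.pos; rw [add_one_mul]; omega
  refine ⟨hns.trans (Nat.mul_le_mul_left _ hs), ?_, fun j hj hij => ?_⟩
  · nlinarith [Nat.mul_le_mul_left (k + 3) hi2,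
      Nat.mul_lt_mul_of_pos_left hsn (show 0 < k + 1 by omega)]
  · nlinarith [Nat.mul_le_mul_left (k + 3) (hsep j hj hij)]

lemma mul_natCeil_div_mem_Ico (n : ℕ) {m : ℕ} (hm : 0 < m) :
    m * ⌈(n : ℝ) / m⌉₊ ∈ Ico n (n + m) := by
  have hm' : (0 : ℝ) < m := Nat.cast_pos.2 hm
  have hle : (n : ℝ) ≤ m * ⌈(n : ℝ) / m⌉₊ := (div_le_iff₀' hm').1 (Nat.le_ceil _)
  have hlt : (m : ℝ) * ⌈(n : ℝ) / m⌉₊ < n + m :=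
    calc _ < m * ((n : ℝ) / m + 1) := by gcongr; exact Nat.ceil_lt_add_one (by positivity)
      _ = n + m := by field_simp
  exact ⟨mod_cast hle, mod_cast hlt⟩

theorem subsets_exist_general
    (σ : Measure ℝ) (hσ : σ (Set.Icc (0 : ℝ) 1) = 1)
    (n k : ℕ) (hk : 2 ≤ k) (hn : k * (k + 3) ≤ n) (y : Fin n → ℝ)
    (hy : ∀ i : Fin n, IsLeast {t : ℝ | t ∈ Set.Icc (0 : ℝ) 1 ∧
      ENNReal.ofReal (((i : ℕ) + 1 : ℝ) / n) ≤ σ (Set.Icc 0 t)} (y i))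
    (ρ : ℝ) (hρ : ρ = ((k : ℝ) - 1) * Rsig σ (1 / (k + 3))) :
    ∃ I : Fin (⌈(n : ℝ) / ((k : ℝ) + 3)⌉₊) → Finset (Fin n),
      (∀ r r', r ≠ r' → Disjoint (I r) (I r')) ∧
      (∀ r, (I r).card = k) ∧
      (∀ r, ∀ i ∈ I r,
        (ρ / (3 * ((k : ℝ) - 1)) ≤ y i ∧ y i ≤ 1 - ρ / (3 * ((k : ℝ) - 1))) ∧
        ∀ j ∈ I r, i ≠ j → ρ / ((k : ℝ) - 1) ≤ |y i - y j|) := by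
  set R := Rsig σ (1 / (k + 3))
  set s := ⌈(n : ℝ) / ((k : ℝ) + 3)⌉₊
  obtain ⟨hns, hsn⟩ : (k + 3) * s ∈ Ico n (n + (k + 3)) := by
    simpa using mul_natCeil_div_mem_Ico n (m := k + 3) (by omega)
  have hn' : (0 : ℝ) < n := mod_cast (show 0 < n by nlinarith)
  have hk3 : (0 : ℝ) < k + 3 := by positivity
  have hy' (i : Fin n) : IsLeast {t | t ∈ Icc 0 1 ∧
      ENNReal.ofReal (((i + 1 : ℕ) : ℝ) / n) ≤ σ (Icc 0 t)} (y i) := by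
    rw [Nat.cast_succ]; exact hy i
  have hk1 : (k : ℝ) - 1 ≠ 0 := by have : (2 : ℝ) ≤ k := mod_cast hk; linarith
  have hρ' : ρ / ((k : ℝ) - 1) = R := by rw [hρ, mul_div_cancel_left₀ _ hk1]
  obtain ⟨I, hdisj, hcard, hI⟩ := exists_spread_blocks hn hns hsn
  refine ⟨I, fun r r' h => hdisj h, hcard, fun r i hi => ?_⟩
  have hgap : ∀ i ∈ I r, ∀ j ∈ I r, (i : ℕ) < j → R ≤ y j - y i := fun i hi j hj hij =>
    Rsig_one_div_le_sub_of_isLeast hn' hk3 (hy' i) (hy' j).1.1 (hy' j).1.2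
      (mod_cast (hI r i hi).2.2 j hj hij)
  have hlow : R ≤ y i - 0 :=
    Rsig_one_div_le_sub_of_isLeast (a := 0) hn' hk3 (isLeast_zero_of_nonpos (by simp))
      (hy' i).1.1 (hy' i).1.2 (by simpa using mod_cast (hI r i hi).1)
  have hup : R ≤ 1 - y i :=
    Rsig_one_div_le_sub_of_isLeast hn' hk3 (hy' i) (right_mem_Icc.2 zero_le_one)
      (by rw [div_self hn'.ne', ENNReal.ofReal_one, hσ]) (mod_cast (hI r i hi).2.1)
  have hR0 : 0 ≤ R := Rsig_nonneg
  rw [mul_comm 3, ← div_div, hρ']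
  refine ⟨⟨by linarith, by linarith⟩, fun j hj hij => ?_⟩
  rcases hij.lt_or_gt with h | h
  · rw [abs_sub_comm]; exact (hgap i hi j hj h).trans (le_abs_self _)
  · exact (hgap j hj i hi h).trans (le_abs_self _)

/-- If `σ` is a probability measure on `[0,1]`, `y_i := min{ y ∈ [0,1] : σ([0,y]) ≥ i/n }`,
`k ≥ 2`, `n ≥ k(k+3)` and `ρ := (k−1)·R_σ(1/(k+3))`, then there exist `⌈n/(k+3)⌉` pairwise
disjoint index sets of size `k` on which the `y_i` satisfy the separation conditions. -/
theorem subsets_exist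
    (σ : Measure ℝ) [IsProbabilityMeasure σ] (hσ : σ (Set.Icc (0 : ℝ) 1) = 1)
    (n k : ℕ) (hk : 2 ≤ k) (hn : k * (k + 3) ≤ n) (y : Fin n → ℝ)
    (hy : ∀ i : Fin n, IsLeast {t : ℝ | t ∈ Set.Icc (0 : ℝ) 1 ∧
      ENNReal.ofReal (((i : ℕ) + 1 : ℝ) / n) ≤ σ (Set.Icc 0 t)} (y i))
    (ρ : ℝ) (hρ : ρ = ((k : ℝ) - 1) * Rsig σ (1 / (k + 3))) :
    ∃ I : Fin (⌈(n : ℝ) / ((k : ℝ) + 3)⌉₊) → Finset (Fin n),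
      (∀ r r', r ≠ r' → Disjoint (I r) (I r')) ∧
      (∀ r, (I r).card = k) ∧
      (∀ r, ∀ i ∈ I r,
        (ρ / (3 * ((k : ℝ) - 1)) ≤ y i ∧ y i ≤ 1 - ρ / (3 * ((k : ℝ) - 1))) ∧
        ∀ j ∈ I r, i ≠ j → ρ / ((k : ℝ) - 1) ≤ |y i - y j|) :=
  subsets_exist_general σ hσ n k hk hn y hy ρ hρ
end

section
/- Let Q : ℝ^d → ℝ be a nonzero polynomial of total degree exactly j ≥ 1. Then there exist a unit vector u ∈ ℝ^d (|u| = 1) and a constant c ≠ 0 such that for every x ∈ ℝ^d the j-th derivative of the single-variable function ρ ↦ Q(x + ρu), evaluated at ρ = 0, equals c; that is, the j-th directional derivative D_u^j Q is the nonzero constant function c. -/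
/-! The `j`-th derivative of `ρ ↦ Q(x + ρu)` at `0` is `j!` times the coefficient of `ρ^j`, and
only the top homogeneous component `Q_j` of `Q` reaches that degree, contributing `Q_j(u)`
whatever `x` is. As `Q_j ≠ 0`, it is nonzero at some `v`, and `v ≠ 0` because `Q_j(0) = 0` for
`j ≥ 1`; by homogeneity `Q_j(v / |v|) = |v|^(-j) Q_j(v) ≠ 0`. -/

open MvPolynomial

namespace Polynomial

theorem coeff_prod_sum_of_natDegree_le {R ι : Type*} [CommSemiring R] (s : Finset ι)
    (f : ι → R[X]) (n : ι → ℕ) (h : ∀ i ∈ s, (f i).natDegree ≤ n i) :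
    (∏ i ∈ s, f i).coeff (∑ i ∈ s, n i) = ∏ i ∈ s, (f i).coeff (n i) := by
  classical
  induction s using Finset.induction_on with
  | empty => simp
  | insert a s ha ih =>
    have hs : ∀ i ∈ s, (f i).natDegree ≤ n i := fun i hi => h i (Finset.mem_insert_of_mem hi)
    rw [Finset.prod_insert ha, Finset.sum_insert ha, Finset.prod_insert ha,
      coeff_mul_add_eq_of_natDegree_le (h a (Finset.mem_insert_self a s))
        ((natDegree_prod_le s f).trans (Finset.sum_le_sum hs)), ih hs]

variable {𝕜 : Type*} [NontriviallyNormedField 𝕜]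

theorem iteratedDeriv_eval (p : 𝕜[X]) (n : ℕ) :
    iteratedDeriv n (fun x => p.eval x) = fun x => (derivative^[n] p).eval x := by
  induction n generalizing p with
  | zero => simp
  | succ n ih =>
    rw [iteratedDeriv_succ', Function.iterate_succ_apply, ← ih]
    congr
    funext x
    exact Polynomial.deriv p

theorem iteratedDeriv_eval_zero (p : 𝕜[X]) (n : ℕ) :
    iteratedDeriv n (fun x => p.eval x) 0 = n.factorial * p.coeff n := by
  rw [congrFun (iteratedDeriv_eval p n) 0, ← coeff_zero_eq_eval_zero, coeff_iterate_derivative,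
    zero_add, Nat.descFactorial_self, nsmul_eq_mul]

end Polynomial

namespace MvPolynomial

variable {R σ : Type*} [CommSemiring R]

theorem IsHomogeneous.eval_smul {p : MvPolynomial σ R} {n : ℕ} (hp : p.IsHomogeneous n)
    (t : R) (v : σ → R) : eval (t • v) p = t ^ n * eval v p := by
  rw [eval_eq, eval_eq, Finset.mul_sum]
  refine Finset.sum_congr rfl fun m hm => ?_
  simp only [Pi.smul_apply, smul_eq_mul, mul_pow, Finset.prod_mul_distrib,
    Finset.prod_pow_eq_pow_sum, ← hp.degree_eq_sum_deg_support hm]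
  ring

theorem homogeneousComponent_totalDegree_ne_zero {Q : MvPolynomial σ R} (hQ : Q ≠ 0) :
    homogeneousComponent Q.totalDegree Q ≠ 0 := by
  obtain ⟨m, hm, hmQ⟩ := Finset.exists_mem_eq_sup Q.support (support_nonempty.mpr hQ)
    fun m => m.sum fun _ e => e
  intro h
  have := coeff_homogeneousComponent (n := Q.totalDegree) (φ := Q) m
  have hmdeg : m.degree = Q.totalDegree := by
    simpa [Finsupp.degree_apply, Finsupp.sum, totalDegree] using hmQ.symm
  rw [h, coeff_zero, if_pos hmdeg] at this
  exact mem_support_iff.mp hm this.symm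

variable {f : σ → Polynomial R}

theorem natDegree_aeval_monomial_le (hf : ∀ i, (f i).natDegree ≤ 1) (m : σ →₀ ℕ)
    (r : R) :
    (aeval f (monomial m r)).natDegree ≤ m.degree := by
  rw [aeval_monomial, Finsupp.prod, Finsupp.degree_apply, Polynomial.algebraMap_eq]
  refine (Polynomial.natDegree_C_mul_le _ _).trans <|
    (Polynomial.natDegree_prod_le _ _).trans <| Finset.sum_le_sum fun i _ => ?_
  simpa using Polynomial.natDegree_pow_le_of_le (m i) (hf i)

theorem coeff_aeval_monomial_degree (hf : ∀ i, (f i).natDegree ≤ 1) (m : σ →₀ ℕ)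
    (r : R) :
    (aeval f (monomial m r)).coeff m.degree =
      eval (fun i => (f i).coeff 1) (monomial m r) := by
  rw [aeval_monomial, eval_monomial, Finsupp.prod, Finsupp.prod, Finsupp.degree_apply,
    Polynomial.algebraMap_eq, Polynomial.coeff_C_mul,
    Polynomial.coeff_prod_sum_of_natDegree_le _ _ _ fun i _ => by
      simpa using Polynomial.natDegree_pow_le_of_le (m i) (hf i)]
  congr 1
  refine Finset.prod_congr rfl fun i _ => ?_
  simpa using Polynomial.coeff_pow_of_natDegree_le (m := m i) (hf i)

theorem coeff_aeval_eq_eval_homogeneousComponent (hf : ∀ i, (f i).natDegree ≤ 1)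
    {Q : MvPolynomial σ R} {n : ℕ} (hQ : Q.totalDegree ≤ n) :
    (aeval f Q).coeff n = eval (fun i => (f i).coeff 1) (homogeneousComponent n Q) := by
  classical
  conv_lhs => rw [Q.as_sum]
  rw [homogeneousComponent_apply, map_sum, map_sum, Polynomial.finsetSum_coeff,
    Finset.sum_filter]
  refine Finset.sum_congr rfl fun m hm => ?_
  split_ifs with hmn
  · rw [← hmn, coeff_aeval_monomial_degree hf]
  · have hlt : m.degree < n := lt_of_le_of_ne ((le_totalDegree hm).trans hQ) hmn
    exact Polynomial.coeff_eq_zero_of_natDegree_lt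
      ((natDegree_aeval_monomial_le hf m _).trans_lt hlt)

theorem IsHomogeneous.exists_sum_sq_eq_one_eval_ne_zero {ι : Type*} [Fintype ι]
    {p : MvPolynomial ι ℝ} {n : ℕ} (hp : p.IsHomogeneous n) (hn : n ≠ 0) (hp0 : p ≠ 0) :
    ∃ u : ι → ℝ, ∑ i, u i ^ 2 = 1 ∧ eval u p ≠ 0 := by
  obtain ⟨v, hv⟩ : ∃ v, eval v p ≠ 0 := by
    by_contra! h
    exact hp0 (MvPolynomial.funext fun v => by simpa using h v)
  have hv0 : 0 < ∑ i, v i ^ 2 := by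
    refine lt_of_le_of_ne (by positivity) fun h => hv ?_
    have : v = 0 := _root_.funext fun i => pow_eq_zero_iff two_ne_zero |>.mp
      ((Finset.sum_eq_zero_iff_of_nonneg fun i _ => sq_nonneg (v i)).mp h.symm i
        (Finset.mem_univ i))
    rw [this, ← zero_smul ℝ (0 : ι → ℝ), hp.eval_smul, zero_pow hn, zero_mul]
  refine ⟨(√(∑ i, v i ^ 2))⁻¹ • v, ?_, ?_⟩
  · simp [mul_pow, ← Finset.mul_sum, Real.sq_sqrt hv0.le, inv_mul_cancel₀ hv0.ne']
  · rw [hp.eval_smul]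
    exact mul_ne_zero (by positivity) hv

theorem polynomial_eval_aeval (p : MvPolynomial σ R) (x : R) :
    (aeval f p).eval x = eval (fun i => (f i).eval x) p := by
  rw [← Polynomial.coe_aeval_eq_eval, comp_aeval_apply, ← coe_aeval_eq_eval]
  simp [Polynomial.coe_aeval_eq_eval]

theorem iteratedDeriv_eval_line {𝕜 : Type*} [NontriviallyNormedField 𝕜]
    {Q : MvPolynomial σ 𝕜} {n : ℕ} (hQ : Q.totalDegree ≤ n) (x u : σ → 𝕜) :
    iteratedDeriv n (fun ρ => eval (fun i => x i + ρ * u i) Q) 0 =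
      n.factorial * eval u (homogeneousComponent n Q) := by
  set line : σ → Polynomial 𝕜 := fun i =>
    Polynomial.C (x i) + Polynomial.C (u i) * Polynomial.X
  have hline : ∀ i, (line i).natDegree ≤ 1 := fun i => by simp only [line]; compute_degree
  have hrestrict : (fun ρ => eval (fun i => x i + ρ * u i) Q) =
      fun ρ => (aeval line Q).eval ρ := by
    funext ρ
    simp only [polynomial_eval_aeval, line, Polynomial.eval_add, Polynomial.eval_mul,
      Polynomial.eval_C, Polynomial.eval_X, mul_comm]
  rw [hrestrict, Polynomial.iteratedDeriv_eval_zero,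
    coeff_aeval_eq_eval_homogeneousComponent hline hQ]
  simp [line]

end MvPolynomial

/-- For a nonzero polynomial `Q` on `ℝ^d` of total degree exactly `j ≥ 1`, there is a unit
direction `u` such that the `j`-th directional derivative `D_u^j Q` is a nonzero constant. -/
theorem directional_derivative_constant
    (d j : ℕ) (hj : 1 ≤ j) (Q : MvPolynomial (Fin d) ℝ)
    (hQ : Q ≠ 0) (hdeg : Q.totalDegree = j) :
    ∃ (u : Fin d → ℝ) (c : ℝ), (∑ i, u i ^ 2 = 1) ∧ c ≠ 0 ∧
      ∀ x : Fin d → ℝ,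
        iteratedDeriv j (fun ρ : ℝ => MvPolynomial.eval (fun i => x i + ρ * u i) Q) 0 = c := by
  obtain ⟨u, hu, hQu⟩ :=
    (homogeneousComponent_isHomogeneous j Q).exists_sum_sq_eq_one_eval_ne_zero (by omega)
      (hdeg ▸ homogeneousComponent_totalDegree_ne_zero hQ)
  exact ⟨u, j.factorial * eval u (homogeneousComponent j Q), hu, mul_ne_zero (by positivity) hQu,
    fun x => iteratedDeriv_eval_line hdeg.le x u⟩
end
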